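/- arXiv:2408.06020 — 6 statements merged into one kernel-verified Lean document; each statement's English description precedes it below -/
import Mathlib

section
/- Let n, k, r be positive integers with n > 2k and r ≥ 2, let H be an n-vertex k-graph with an r-edge-coloring c: E(H) → {C_1,…,C_r}, and assume H contains no good gadget of the first, second, or third kind. Let u, v be distinct vertices of H with |N_H(u) ∩ N_H(v)| > C(n−2,k−1) − C(n−k−1,k−1) + 1. Then either uTv is S for all T ∈ N_H(u) ∩ N_H(v), or there exist i ≠ j in [r] such that uTv is C_iC_j for all T ∈ N_H(u) ∩ N_H(v). -/
open Finset

def HyperUniform {V : Type*} (k : ℕ) (H : Finset (Finset V)) : Prop := ∀ e ∈ H, e.card = k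

def IsPM {V : Type*} [Fintype V] (H M : Finset (Finset V)) : Prop :=
  M ⊆ H ∧ (∀ e ∈ M, ∀ f ∈ M, e ≠ f → Disjoint e f) ∧ ∀ v : V, ∃ e ∈ M, v ∈ e

def hdeg {V : Type*} [DecidableEq V] (H : Finset (Finset V)) (v : V) : ℕ :=
  (H.filter (fun e => v ∈ e)).card

def nbr {V : Type*} [Fintype V] [DecidableEq V] (H : Finset (Finset V)) (u : V) :
    Finset (Finset V) :=
  (Finset.univ : Finset V).powerset.filter (fun T => u ∉ T ∧ insert u T ∈ H)

def cprof {V : Type*} {r : ℕ} (c : Finset V → Fin r) (M : Finset (Finset V)) : Fin r → ℕ :=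
  fun i => (M.filter (fun e => c e = i)).card

def Gadget1 {V : Type*} [Fintype V] [DecidableEq V] {r : ℕ} (H : Finset (Finset V))
    (c : Finset V → Fin r) : Prop :=
  ∃ u v : V, u ≠ v ∧ ∃ T₁ T₂ : Finset V,
    T₁ ∈ nbr H u ∧ T₁ ∈ nbr H v ∧ T₂ ∈ nbr H u ∧ T₂ ∈ nbr H v ∧ Disjoint T₁ T₂ ∧
    cprof c {insert u T₁, insert v T₂} ≠ cprof c {insert v T₁, insert u T₂}

def Gadget2 {V : Type*} [Fintype V] [DecidableEq V] {r : ℕ} (H : Finset (Finset V))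
    (c : Finset V → Fin r) : Prop :=
  ∃ u₁ u₂ u₃ : V, u₁ ≠ u₂ ∧ u₁ ≠ u₃ ∧ u₂ ≠ u₃ ∧ ∃ T₁ T₂ T₃ : Finset V,
    T₁ ∈ nbr H u₂ ∧ T₁ ∈ nbr H u₃ ∧ T₂ ∈ nbr H u₁ ∧ T₂ ∈ nbr H u₃ ∧
    T₃ ∈ nbr H u₁ ∧ T₃ ∈ nbr H u₂ ∧
    Disjoint T₁ T₂ ∧ Disjoint T₁ T₃ ∧ Disjoint T₂ T₃ ∧
    u₁ ∉ T₁ ∧ u₂ ∉ T₂ ∧ u₃ ∉ T₃ ∧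
    cprof c {insert u₂ T₁, insert u₃ T₂, insert u₁ T₃} ≠
      cprof c {insert u₃ T₁, insert u₁ T₂, insert u₂ T₃}

def Gadget3 {V : Type*} [Fintype V] [DecidableEq V] {r : ℕ} (k : ℕ) (H : Finset (Finset V))
    (c : Finset V → Fin r) : Prop :=
  ∃ e ∈ H, ∃ f ∈ H, ∃ ℓ : ℕ, 1 ≤ ℓ ∧ ℓ ≤ k ∧
    ∃ u v : Fin ℓ → V, ∃ T : Fin ℓ → Finset V,
      Function.Injective u ∧ Function.Injective v ∧
      Finset.image u Finset.univ = e \ f ∧ Finset.image v Finset.univ = f \ e ∧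
      (∀ i, T i ∈ nbr H (u i) ∧ T i ∈ nbr H (v i)) ∧
      (∀ i j, i ≠ j → Disjoint (T i) (T j)) ∧
      (∀ i, Disjoint (T i) (e ∪ f)) ∧
      cprof c (insert f (Finset.image (fun i => insert (u i) (T i)) Finset.univ)) ≠
        cprof c (insert e (Finset.image (fun i => insert (v i) (T i)) Finset.univ))

def GadgetFree {V : Type*} [Fintype V] [DecidableEq V] {r : ℕ} (k : ℕ) (H : Finset (Finset V))
    (c : Finset V → Fin r) : Prop :=
  ¬ Gadget1 H c ∧ ¬ Gadget2 H c ∧ ¬ Gadget3 k H c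

def TypeS {V : Type*} [Fintype V] [DecidableEq V] {r : ℕ} (k : ℕ) (H : Finset (Finset V))
    (c : Finset V → Fin r) (u v : V) : Prop :=
  k ^ 2 * ((Fintype.card V - 2).choose (k - 2)) ≤
    ((nbr H u ∩ nbr H v).filter (fun T => c (insert u T) = c (insert v T))).card

def TypeCC {V : Type*} [Fintype V] [DecidableEq V] {r : ℕ} (k : ℕ) (H : Finset (Finset V))
    (c : Finset V → Fin r) (i j : Fin r) (u v : V) : Prop :=
  k ^ 2 * ((Fintype.card V - 2).choose (k - 2)) ≤
    ((nbr H u ∩ nbr H v).filter (fun T => c (insert u T) = i ∧ c (insert v T) = j)).card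


namespace HiltonCross

variable {n : ℕ}

/-- cross-intersecting families -/
def XInt (A B : Finset (Finset (Fin n))) : Prop := ∀ S ∈ A, ∀ T ∈ B, ¬ Disjoint S T

lemma XInt.symm {A B : Finset (Finset (Fin n))} (h : XInt A B) : XInt B A :=
  fun S hS T hT hd => h T hT S hS hd.symm

def hcomp (i j : Fin n) (S : Finset (Fin n)) : Finset (Fin n) :=
  if j ∈ S ∧ i ∉ S then insert i (S.erase j) else S

def hmove (i j : Fin n) (A : Finset (Finset (Fin n))) (S : Finset (Fin n)) : Finset (Fin n) :=
  if hcomp i j S ∈ A then S else hcomp i j S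

def hcompF (i j : Fin n) (A : Finset (Finset (Fin n))) : Finset (Finset (Fin n)) :=
  A.image (hmove i j A)

lemma hcomp_card (i j : Fin n) (S : Finset (Fin n)) : (hcomp i j S).card = S.card := by
  unfold hcomp
  split_ifs with h
  · rw [card_insert_of_notMem (fun hmem => h.2 (mem_of_mem_erase hmem)),
      card_erase_of_mem h.1]
    have : 0 < S.card := card_pos.2 ⟨j, h.1⟩
    omega
  · rfl

lemma hcomp_subset {i j : Fin n} {G S : Finset (Fin n)} (hS : S ⊆ G) (hi : i ∈ G) :
    hcomp i j S ⊆ G := by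
  unfold hcomp
  split_ifs with h
  · exact insert_subset hi ((erase_subset _ _).trans hS)
  · exact hS

lemma hcomp_eq_of_pat {i j : Fin n} {S : Finset (Fin n)} (h : j ∈ S ∧ i ∉ S) :
    hcomp i j S = insert i (S.erase j) := if_pos h

lemma hcomp_pat {i j : Fin n} {S : Finset (Fin n)} (h : hcomp i j S ≠ S) :
    j ∈ S ∧ i ∉ S := by
  by_contra hp
  exact h (if_neg hp)

lemma hcomp_recover {i j : Fin n} (hij : i ≠ j) {S : Finset (Fin n)} (h : j ∈ S ∧ i ∉ S) :
    insert j ((hcomp i j S).erase i) = S := by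
  rw [hcomp_eq_of_pat h, erase_insert (fun hmem => h.2 (mem_of_mem_erase hmem)),
    insert_erase h.1]

lemma hmove_injOn (i j : Fin n) (hij : i ≠ j) (A : Finset (Finset (Fin n))) :
    Set.InjOn (hmove i j A) A := by
  intro S hS T hT h
  unfold hmove at h
  split_ifs at h with h1 h2 h2
  · exact h
  · exact absurd (show hcomp i j T ∈ A by rw [← h]; exact hS) h2
  · exact absurd (show hcomp i j S ∈ A by rw [h]; exact hT) h1
  · have hSp : j ∈ S ∧ i ∉ S := hcomp_pat (fun he => h1 (by rw [he]; exact hS))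
    have hTp : j ∈ T ∧ i ∉ T := hcomp_pat (fun he => h2 (by rw [he]; exact hT))
    rw [← hcomp_recover hij hSp, ← hcomp_recover hij hTp, h]

lemma hcompF_card (i j : Fin n) (hij : i ≠ j) (A : Finset (Finset (Fin n))) :
    (hcompF i j A).card = A.card :=
  card_image_of_injOn (hmove_injOn i j hij A)

lemma hcompF_subset_pow {i j : Fin n} {G : Finset (Fin n)} {a : ℕ}
    {A : Finset (Finset (Fin n))} (hi : i ∈ G) (hA : A ⊆ G.powersetCard a) :
    hcompF i j A ⊆ G.powersetCard a := by
  intro S hS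
  obtain ⟨T, hT, rfl⟩ := mem_image.1 hS
  have hT' := mem_powersetCard.1 (hA hT)
  unfold hmove
  split_ifs with h
  · exact hA hT
  · exact mem_powersetCard.2 ⟨hcomp_subset hT'.1 hi, (hcomp_card i j T).trans hT'.2⟩

lemma hcompF_xint {i j : Fin n} (hij : i ≠ j) {A B : Finset (Finset (Fin n))}
    (h : XInt A B) : XInt (hcompF i j A) (hcompF i j B) := by
  intro S' hS' T' hT' hdisj
  obtain ⟨S, hSA, rfl⟩ := mem_image.1 hS'
  obtain ⟨T, hTB, rfl⟩ := mem_image.1 hT'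
  unfold hmove at hdisj
  split_ifs at hdisj with h1 h2 h2
  · exact h S hSA T hTB hdisj
  · -- S kept, T moved: hcomp T ∉ B
    have hTp : j ∈ T ∧ i ∉ T := hcomp_pat (fun he => h2 (by rw [he]; exact hTB))
    rw [hcomp_eq_of_pat hTp] at hdisj
    obtain ⟨x, hxS, hxT⟩ := not_disjoint_iff.1 (h S hSA T hTB)
    have hxj : x = j ∨ x ∈ T.erase j := by
      by_cases hx : x = j
      · exact Or.inl hx
      · exact Or.inr (mem_erase.2 ⟨hx, hxT⟩)
    rcases hxj with hxe | hx
    · rw [hxe] at hxS hxT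
      have hiS : i ∉ S := fun hiS =>
        (disjoint_left.1 hdisj hiS) (mem_insert_self i _)
      have hSp : j ∈ S ∧ i ∉ S := ⟨hxS, hiS⟩
      obtain ⟨y, hyS, hyT⟩ := not_disjoint_iff.1 (h _ h1 T hTB)
      rw [hcomp_eq_of_pat hSp] at hyS
      rcases mem_insert.1 hyS with rfl | hy
      · exact hTp.2 hyT
      · exact (disjoint_left.1 hdisj (mem_of_mem_erase hy))
          (mem_insert_of_mem (mem_erase.2 ⟨(mem_erase.1 hy).1, hyT⟩))
    · exact (disjoint_left.1 hdisj hxS) (mem_insert_of_mem hx)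
  · -- S moved, T kept : symmetric
    have hSp : j ∈ S ∧ i ∉ S := hcomp_pat (fun he => h1 (by rw [he]; exact hSA))
    rw [hcomp_eq_of_pat hSp] at hdisj
    obtain ⟨x, hxS, hxT⟩ := not_disjoint_iff.1 (h S hSA T hTB)
    have hxj : x = j ∨ x ∈ S.erase j := by
      by_cases hx : x = j
      · exact Or.inl hx
      · exact Or.inr (mem_erase.2 ⟨hx, hxS⟩)
    rcases hxj with hxe | hx
    · rw [hxe] at hxS hxT
      have hiT : i ∉ T := fun hiT =>
        (disjoint_right.1 hdisj hiT) (mem_insert_self i _)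
      have hTp : j ∈ T ∧ i ∉ T := ⟨hxT, hiT⟩
      obtain ⟨y, hyS, hyT⟩ := not_disjoint_iff.1 (h S hSA _ h2)
      rw [hcomp_eq_of_pat hTp] at hyT
      rcases mem_insert.1 hyT with rfl | hy
      · exact hSp.2 hyS
      · exact (disjoint_right.1 hdisj (mem_of_mem_erase hy))
          (mem_insert_of_mem (mem_erase.2 ⟨(mem_erase.1 hy).1, hyS⟩))
    · exact (disjoint_right.1 hdisj hxT) (mem_insert_of_mem hx)
  · -- both moved: i in both
    have hSp : j ∈ S ∧ i ∉ S := hcomp_pat (fun he => h1 (by rw [he]; exact hSA))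
    have hTp : j ∈ T ∧ i ∉ T := hcomp_pat (fun he => h2 (by rw [he]; exact hTB))
    rw [hcomp_eq_of_pat hSp, hcomp_eq_of_pat hTp] at hdisj
    exact (disjoint_left.1 hdisj (mem_insert_self i _)) (mem_insert_self i _)


def swt (S : Finset (Fin n)) : ℕ := ∑ x ∈ S, (x : ℕ)

def fwt (A : Finset (Finset (Fin n))) : ℕ := ∑ S ∈ A, swt S

lemma swt_hcomp_lt {i j : Fin n} (hij : i < j) {S : Finset (Fin n)}
    (hp : j ∈ S ∧ i ∉ S) : swt (hcomp i j S) < swt S := by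
  rw [hcomp_eq_of_pat hp]
  unfold swt
  rw [sum_insert (fun hmem => hp.2 (mem_of_mem_erase hmem))]
  have h1 : ∑ x ∈ S.erase j, (x:ℕ) + (j:ℕ) = ∑ x ∈ S, (x:ℕ) := by
    rw [sum_erase_add _ _ hp.1]
  have : (i:ℕ) < (j:ℕ) := hij
  omega

lemma fwt_hcompF_le {i j : Fin n} (hij : i < j) (A : Finset (Finset (Fin n))) :
    fwt (hcompF i j A) ≤ fwt A := by
  unfold fwt hcompF
  rw [sum_image (hmove_injOn i j hij.ne A)]
  apply sum_le_sum
  intro S hS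
  unfold hmove
  split_ifs with h
  · exact le_rfl
  · by_cases hp : j ∈ S ∧ i ∉ S
    · exact (swt_hcomp_lt hij hp).le
    · rw [hcomp, if_neg hp]

lemma fwt_hcompF_lt {i j : Fin n} (hij : i < j) {A : Finset (Finset (Fin n))}
    (hne : hcompF i j A ≠ A) : fwt (hcompF i j A) < fwt A := by
  have hex : ∃ S ∈ A, hmove i j A S ≠ S := by
    by_contra hall
    push_neg at hall
    exact hne (by
      unfold hcompF
      rw [image_congr (fun S hS => hall S hS)]
      exact image_id')
  obtain ⟨S₀, hS₀, hS₀ne⟩ := hex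
  unfold fwt hcompF
  rw [sum_image (hmove_injOn i j hij.ne A)]
  apply sum_lt_sum (f := fun S => swt (hmove i j A S))
  · intro S hS
    unfold hmove
    split_ifs with h
    · exact le_rfl
    · by_cases hp : j ∈ S ∧ i ∉ S
      · exact (swt_hcomp_lt hij hp).le
      · rw [hcomp, if_neg hp]
  · refine ⟨S₀, hS₀, ?_⟩
    have hmv : hmove i j A S₀ = hcomp i j S₀ := by
      unfold hmove
      split_ifs with h
      · exact absurd (by unfold hmove; rw [if_pos h]) hS₀ne
      · rfl
    rw [hmv]
    have hp : j ∈ S₀ ∧ i ∉ S₀ := hcomp_pat (fun he => hS₀ne (by unfold hmove; rw [he]; simp))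
    exact swt_hcomp_lt hij hp

def ShiftedOn (G : Finset (Fin n)) (A : Finset (Finset (Fin n))) : Prop :=
  ∀ i j : Fin n, i ∈ G → i < j → hcompF i j A = A

lemma shifted_mem {i j : Fin n} {A : Finset (Finset (Fin n))}
    (h : hcompF i j A = A) {S : Finset (Fin n)} (hS : S ∈ A) (hj : j ∈ S) (hi : i ∉ S) :
    insert i (S.erase j) ∈ A := by
  by_cases hc : hcomp i j S ∈ A
  · rwa [hcomp_eq_of_pat ⟨hj, hi⟩] at hc
  · have : hmove i j A S ∈ hcompF i j A := mem_image_of_mem _ hS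
    rw [h] at this
    rw [hmove, if_neg hc] at this
    rw [← hcomp_eq_of_pat ⟨hj, hi⟩]
    exact absurd this hc

lemma exists_shifted (G : Finset (Fin n)) (a : ℕ) :
    ∀ (N : ℕ) (A B : Finset (Finset (Fin n))), fwt A + fwt B ≤ N →
    A ⊆ G.powersetCard a → B ⊆ G.powersetCard a → XInt A B →
    ∃ A' B' : Finset (Finset (Fin n)),
      A' ⊆ G.powersetCard a ∧ B' ⊆ G.powersetCard a ∧ XInt A' B' ∧
      A'.card = A.card ∧ B'.card = B.card ∧ ShiftedOn G A' ∧ ShiftedOn G B' := by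
  intro N
  induction N using Nat.strong_induction_on with
  | _ N IH =>
    intro A B hN hA hB hx
    by_cases hsh : ShiftedOn G A ∧ ShiftedOn G B
    · exact ⟨A, B, hA, hB, hx, rfl, rfl, hsh.1, hsh.2⟩
    · have hex : ∃ i j : Fin n, i ∈ G ∧ i < j ∧ (hcompF i j A ≠ A ∨ hcompF i j B ≠ B) := by
        by_contra hall
        push_neg at hall
        exact hsh ⟨fun i j hi hij => (hall i j hi hij).1, fun i j hi hij => (hall i j hi hij).2⟩
      obtain ⟨i, j, hiG, hij, hor⟩ := hex
      have hlt : fwt (hcompF i j A) + fwt (hcompF i j B) < fwt A + fwt B := by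
        rcases hor with h | h
        · exact add_lt_add_of_lt_of_le (fwt_hcompF_lt hij h) (fwt_hcompF_le hij B)
        · exact add_lt_add_of_le_of_lt (fwt_hcompF_le hij A) (fwt_hcompF_lt hij h)
      have hM : fwt (hcompF i j A) + fwt (hcompF i j B) < N := lt_of_lt_of_le hlt hN
      obtain ⟨A', B', c1, c2, c3, c4, c5, c6, c7⟩ :=
        IH _ hM (hcompF i j A) (hcompF i j B) le_rfl
          (hcompF_subset_pow hiG hA) (hcompF_subset_pow hiG hB) (hcompF_xint hij.ne hx)
      exact ⟨A', B', c1, c2, c3, c4.trans (hcompF_card i j hij.ne A),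
        c5.trans (hcompF_card i j hij.ne B), c6, c7⟩


lemma hilton_base {G : Finset (Fin n)} {a : ℕ} {A B : Finset (Finset (Fin n))}
    (hA : A ⊆ G.powersetCard a) (hB : B ⊆ G.powersetCard a) (hx : XInt A B)
    (hG : G.card = 2 * a) : A.card + B.card ≤ (2 * a).choose a := by
  classical
  set A' := A.image (fun S => G \ S) with hA'def
  have hinj : Set.InjOn (fun S => G \ S) A := by
    intro S hS T hT h
    have hS' : S ⊆ G := (mem_powersetCard.1 (hA hS)).1
    have hT' : T ⊆ G := (mem_powersetCard.1 (hA hT)).1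
    simp only at h
    have : G \ (G \ S) = G \ (G \ T) := by rw [h]
    rwa [sdiff_sdiff_self_left, sdiff_sdiff_self_left,
      inter_eq_right.2 hS', inter_eq_right.2 hT'] at this
  have hcard : A'.card = A.card := card_image_of_injOn hinj
  have hsub : A' ⊆ G.powersetCard a := by
    intro S hS
    obtain ⟨T, hT, rfl⟩ := mem_image.1 hS
    have hT' := mem_powersetCard.1 (hA hT)
    refine mem_powersetCard.2 ⟨sdiff_subset, ?_⟩
    rw [card_sdiff_of_subset hT'.1, hG, hT'.2]
    omega
  have hdisj : Disjoint A' B := by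
    rw [disjoint_left]
    intro S hS hSB
    obtain ⟨T, hT, rfl⟩ := mem_image.1 hS
    exact hx T hT _ hSB disjoint_sdiff
  calc A.card + B.card = A'.card + B.card := by rw [hcard]
    _ = (A' ∪ B).card := (card_union_of_disjoint hdisj).symm
    _ ≤ (G.powersetCard a).card := card_le_card (union_subset hsub hB)
    _ = (2*a).choose a := by rw [card_powersetCard, hG]


lemma meets_bound {G' T₀ : Finset (Fin n)} {b : ℕ} {C : Finset (Finset (Fin n))}
    (hT : T₀ ⊆ G') (hC : C ⊆ G'.powersetCard b) (hmeet : ∀ S ∈ C, ¬ Disjoint S T₀) :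
    C.card + ((G'.card - T₀.card).choose b) ≤ G'.card.choose b := by
  classical
  set Q := (G' \ T₀).powersetCard b with hQdef
  have hdisj : Disjoint C Q := by
    rw [disjoint_left]
    intro S hS hSQ
    have hsub : S ⊆ G' \ T₀ := (mem_powersetCard.1 hSQ).1
    exact hmeet S hS (disjoint_of_subset_left hsub sdiff_disjoint)
  have hQcard : Q.card = (G'.card - T₀.card).choose b := by
    rw [hQdef, card_powersetCard, card_sdiff_of_subset hT]
  have hsub : C ∪ Q ⊆ G'.powersetCard b :=
    union_subset hC (powersetCard_mono sdiff_subset)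
  calc C.card + (G'.card - T₀.card).choose b = C.card + Q.card := by rw [hQcard]
    _ = (C ∪ Q).card := (card_union_of_disjoint hdisj).symm
    _ ≤ (G'.powersetCard b).card := card_le_card hsub
    _ = G'.card.choose b := card_powersetCard _ _

lemma exists_avoid_top {G : Finset (Fin n)} {g : Fin n} (hgG : g ∈ G)
    (hgmax : ∀ x ∈ G, x ≤ g) {a : ℕ} {A' : Finset (Finset (Fin n))}
    (hA' : A' ⊆ G.powersetCard a) (hsh : ShiftedOn G A') (hne : A'.Nonempty)
    (hcard : a + 2 ≤ G.card) : ∃ S ∈ A', g ∉ S := by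
  obtain ⟨S, hS⟩ := hne
  by_cases hgS : g ∈ S
  · have hSsub : S ⊆ G := (mem_powersetCard.1 (hA' hS)).1
    have hScard : S.card = a := (mem_powersetCard.1 (hA' hS)).2
    have h2 : 2 ≤ (G \ S).card := by rw [card_sdiff_of_subset hSsub, hScard]; omega
    have h1 : ((G \ S).erase g).Nonempty := by
      rw [← card_pos]
      have := card_erase_le (s := G \ S) (a := g)
      have := Finset.pred_card_le_card_erase (s := G \ S) (a := g)
      omega
    obtain ⟨j, hj⟩ := h1
    have hjg : j ≠ g := (mem_erase.1 hj).1
    have hjGS : j ∈ G \ S := mem_of_mem_erase hj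
    have hjG : j ∈ G := (mem_sdiff.1 hjGS).1
    have hjS : j ∉ S := (mem_sdiff.1 hjGS).2
    have hjlt : j < g := lt_of_le_of_ne (hgmax j hjG) hjg
    refine ⟨insert j (S.erase g), shifted_mem (hsh j g hjG hjlt) hS hgS hjS, ?_⟩
    intro hmem
    rcases mem_insert.1 hmem with h | h
    · exact hjg h.symm
    · exact (mem_erase.1 h).1 rfl
  · exact ⟨S, hS, hgS⟩

lemma xint_erase_top {G : Finset (Fin n)} {g : Fin n} (hgmax : ∀ x ∈ G, x ≤ g) {a : ℕ}
    {A' B' : Finset (Finset (Fin n))} (hA' : A' ⊆ G.powersetCard a)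
    (hB' : B' ⊆ G.powersetCard a) (hsh : ShiftedOn G A') (hx : XInt A' B')
    (hGcard : 2 * a ≤ G.card) :
    ∀ S ∈ A', g ∈ S → ∀ T ∈ B', g ∈ T → ¬ Disjoint (S.erase g) (T.erase g) := by
  intro S hS hgS T hT hgT hd
  have hSsub : S ⊆ G := (mem_powersetCard.1 (hA' hS)).1
  have hTsub : T ⊆ G := (mem_powersetCard.1 (hB' hT)).1
  have hScard : S.card = a := (mem_powersetCard.1 (hA' hS)).2
  have hTcard : T.card = a := (mem_powersetCard.1 (hB' hT)).2
  have hUcard : (S ∪ T).card < G.card := by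
    have h1 := card_union_add_card_inter S T
    have h2 : 0 < (S ∩ T).card := card_pos.2 ⟨g, mem_inter.2 ⟨hgS, hgT⟩⟩
    omega
  have hne : (G \ (S ∪ T)).Nonempty := by
    rw [← card_pos, card_sdiff_of_subset (union_subset hSsub hTsub)]
    omega
  obtain ⟨j, hj⟩ := hne
  have hjG : j ∈ G := (mem_sdiff.1 hj).1
  have hjST : j ∉ S ∪ T := (mem_sdiff.1 hj).2
  have hjS : j ∉ S := fun h => hjST (mem_union_left _ h)
  have hjT : j ∉ T := fun h => hjST (mem_union_right _ h)
  have hjg : j ≠ g := fun h => hjS (h ▸ hgS)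
  have hjlt : j < g := lt_of_le_of_ne (hgmax j hjG) hjg
  have hS₂ : insert j (S.erase g) ∈ A' := shifted_mem (hsh j g hjG hjlt) hS hgS hjS
  obtain ⟨x, hxS, hxT⟩ := not_disjoint_iff.1 (hx _ hS₂ T hT)
  rcases mem_insert.1 hxS with rfl | hx'
  · exact hjT hxT
  · have hxg : x ≠ g := (mem_erase.1 hx').1
    exact (disjoint_left.1 hd hx') (mem_erase.2 ⟨hxg, hxT⟩)


lemma hilton : ∀ (m : ℕ) (G : Finset (Fin n)), G.card = m → ∀ (a : ℕ), 1 ≤ a → 2 * a ≤ m →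
    ∀ (A B : Finset (Finset (Fin n))), A ⊆ G.powersetCard a → B ⊆ G.powersetCard a →
    XInt A B → A.Nonempty → B.Nonempty →
    A.card + B.card + (m - a).choose a ≤ m.choose a + 1 := by
  intro m
  induction m using Nat.strong_induction_on with
  | _ m IH =>
  intro G hG a ha ham A B hA hB hx hAne hBne
  classical
  by_cases ha1 : a = 1
  · subst ha1
    obtain ⟨S₀, hS₀⟩ := hAne
    obtain ⟨T₀, hT₀⟩ := hBne
    obtain ⟨x, rfl⟩ := card_eq_one.1 (mem_powersetCard.1 (hA hS₀)).2
    obtain ⟨y, rfl⟩ := card_eq_one.1 (mem_powersetCard.1 (hB hT₀)).2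
    have hxy : x = y := by
      by_contra hne
      exact hx _ hS₀ _ hT₀ (by rw [disjoint_singleton_left, mem_singleton]; exact hne)
    have hAsub : A ⊆ {({x} : Finset (Fin n))} := by
      intro S hS
      obtain ⟨z, rfl⟩ := card_eq_one.1 (mem_powersetCard.1 (hA hS)).2
      have hz : z = y := by
        by_contra hne
        exact hx _ hS _ hT₀ (by rw [disjoint_singleton_left, mem_singleton]; exact hne)
      simp [hz, hxy]
    have hBsub : B ⊆ {({x} : Finset (Fin n))} := by
      intro T hT
      obtain ⟨z, rfl⟩ := card_eq_one.1 (mem_powersetCard.1 (hB hT)).2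
      have hz : x = z := by
        by_contra hne
        exact hx _ hS₀ _ hT (by rw [disjoint_singleton_left, mem_singleton]; exact hne)
      simp [hz]
    have h1 : A.card ≤ 1 := (card_le_card hAsub).trans (by simp)
    have h2 : B.card ≤ 1 := (card_le_card hBsub).trans (by simp)
    rw [Nat.choose_one_right, Nat.choose_one_right]
    omega
  · have ha2 : 2 ≤ a := by omega
    by_cases hm : m = 2 * a
    · have hbase := hilton_base hA hB hx (by rw [hG, hm])
      have : m - a = a := by omega
      rw [this, Nat.choose_self, hm]
      omega
    · have hm2a : 2 * a < m := by omega
      obtain ⟨b, rfl⟩ : ∃ b, a = b + 1 := ⟨a - 1, by omega⟩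
      obtain ⟨p, rfl⟩ : ∃ p, m = p + b + 2 := ⟨m - b - 2, by omega⟩
      have hb1 : 1 ≤ b := by omega
      have hbp : b ≤ p := by omega
      have hGne : G.Nonempty := card_pos.1 (by omega)
      set g := G.max' hGne with hgdef
      have hgG : g ∈ G := G.max'_mem hGne
      have hgmax : ∀ x ∈ G, x ≤ g := fun x hx => G.le_max' x hx
      obtain ⟨A', B', hA', hB', hx', hcardA, hcardB, hshA, hshB⟩ :=
        exists_shifted G (b + 1) (fwt A + fwt B) A B le_rfl hA hB hx
      have hAne' : A'.Nonempty := card_pos.1 (by rw [hcardA]; exact card_pos.2 hAne)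
      have hBne' : B'.Nonempty := card_pos.1 (by rw [hcardB]; exact card_pos.2 hBne)
      set G' := G.erase g with hG'def
      have hG' : G'.card = p + b + 1 := by
        rw [hG'def, card_erase_of_mem hgG, hG]
        omega
      set A₀ := A'.filter (fun S => ¬ g ∈ S) with hA₀def
      set A₁ := (A'.filter (fun S => g ∈ S)).image (fun S => S.erase g) with hA₁def
      set B₀ := B'.filter (fun S => ¬ g ∈ S) with hB₀def
      set B₁ := (B'.filter (fun S => g ∈ S)).image (fun S => S.erase g) with hB₁def
      have hsub0 : ∀ {C' : Finset (Finset (Fin n))}, C' ⊆ G.powersetCard (b+1) →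
          C'.filter (fun S => ¬ g ∈ S) ⊆ G'.powersetCard (b+1) := by
        intro C' hC' S hS
        have h1 := mem_filter.1 hS
        have h2 := mem_powersetCard.1 (hC' h1.1)
        exact mem_powersetCard.2 ⟨subset_erase.2 ⟨h2.1, h1.2⟩, h2.2⟩
      have hsub1 : ∀ {C' : Finset (Finset (Fin n))}, C' ⊆ G.powersetCard (b+1) →
          (C'.filter (fun S => g ∈ S)).image (fun S => S.erase g) ⊆ G'.powersetCard b := by
        intro C' hC' S hS
        obtain ⟨S', hS', rfl⟩ := mem_image.1 hS
        have h1 := mem_filter.1 hS'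
        have h2 := mem_powersetCard.1 (hC' h1.1)
        refine mem_powersetCard.2 ⟨erase_subset_erase g h2.1, ?_⟩
        rw [card_erase_of_mem h1.2, h2.2]
        omega
      have hsplit : ∀ (C' : Finset (Finset (Fin n))),
          C'.card = (C'.filter (fun S => ¬ g ∈ S)).card +
            ((C'.filter (fun S => g ∈ S)).image (fun S => S.erase g)).card := by
        intro C'
        have himg : ((C'.filter (fun S => g ∈ S)).image (fun S => S.erase g)).card =
            (C'.filter (fun S => g ∈ S)).card := by
          apply card_image_of_injOn
          intro S hS T hT h
          simp only at h
          have hgS : g ∈ S := (mem_filter.1 hS).2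
          have hgT : g ∈ T := (mem_filter.1 hT).2
          rw [← insert_erase hgS, ← insert_erase hgT, h]
        rw [himg]
        rw [← card_filter_add_card_filter_not (s := C') (p := fun S => g ∈ S)]
        omega
      have hx0 : XInt A₀ B₀ := fun S hS T hT =>
        hx' S (filter_subset _ _ hS) T (filter_subset _ _ hT)
      have hA0ne : A₀.Nonempty := by
        obtain ⟨S, hS, hgS⟩ := exists_avoid_top hgG hgmax hA' hshA hAne' (by omega)
        exact ⟨S, mem_filter.2 ⟨hS, hgS⟩⟩
      have hB0ne : B₀.Nonempty := by
        obtain ⟨S, hS, hgS⟩ := exists_avoid_top hgG hgmax hB' hshB hBne' (by omega)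
        exact ⟨S, mem_filter.2 ⟨hS, hgS⟩⟩
      have I₀ : A₀.card + B₀.card + p.choose (b+1) ≤ (p+b+1).choose (b+1) + 1 := by
        have := IH (p+b+1) (by omega) G' hG' (b+1) (by omega) (by omega)
          A₀ B₀ (hsub0 hA') (hsub0 hB') hx0 hA0ne hB0ne
        rwa [show p + b + 1 - (b+1) = p from by omega] at this
      have pasG : (p+b+2).choose (b+1) = (p+b+1).choose b + (p+b+1).choose (b+1) := by
        rw [show p+b+2 = (p+b+1)+1 from by omega]
        exact Nat.choose_succ_succ _ _
      have pasS : (p+1).choose (b+1) = p.choose b + p.choose (b+1) := Nat.choose_succ_succ _ _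
      have hAsplit : A'.card = A₀.card + A₁.card := hsplit A'
      have hBsplit : B'.card = B₀.card + B₁.card := hsplit B'
      rw [show p + b + 2 - (b+1) = p + 1 from by omega]
      rw [← hcardA, ← hcardB]
      by_cases hB1 : B₁.Nonempty
      · by_cases hA1 : A₁.Nonempty
        · -- both nonempty
          have hx1 : XInt A₁ B₁ := by
            intro S hS T hT
            obtain ⟨S', hS', rfl⟩ := mem_image.1 hS
            obtain ⟨T', hT', rfl⟩ := mem_image.1 hT
            exact xint_erase_top hgmax hA' hB' hshA hx' (by omega)
              S' (mem_filter.1 hS').1 (mem_filter.1 hS').2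
              T' (mem_filter.1 hT').1 (mem_filter.1 hT').2
          have I₁ : A₁.card + B₁.card + (p+1).choose b ≤ (p+b+1).choose b + 1 := by
            have := IH (p+b+1) (by omega) G' hG' b hb1 (by omega)
              A₁ B₁ (hsub1 hA') (hsub1 hB') hx1 hA1 hB1
            rwa [show p + b + 1 - b = p + 1 from by omega] at this
          obtain ⟨q, rfl⟩ : ∃ q, b = q + 1 := ⟨b - 1, by omega⟩
          have pasB : (p+1).choose (q+1) = p.choose q + p.choose (q+1) :=
            Nat.choose_succ_succ _ _
          have hpos : 0 < p.choose q := Nat.choose_pos (by omega)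
          omega
        · -- A₁ empty
          rw [not_nonempty_iff_eq_empty] at hA1
          have hA1card : A₁.card = 0 := by rw [hA1]; rfl
          obtain ⟨S₀, hS₀⟩ := hA0ne
          have hS₀' := mem_filter.1 hS₀
          have hS₀sub : S₀ ⊆ G' := (mem_powersetCard.1 (hsub0 hA' hS₀)).1
          have hS₀card : S₀.card = b + 1 := (mem_powersetCard.1 (hsub0 hA' hS₀)).2
          have J : B₁.card + p.choose b ≤ (p+b+1).choose b := by
            have := meets_bound (G' := G') (T₀ := S₀) hS₀sub (hsub1 hB')
              (by
                intro T hT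
                obtain ⟨T', hT', rfl⟩ := mem_image.1 hT
                intro hd
                obtain ⟨x, hxT, hxS⟩ := not_disjoint_iff.1
                  (hx'.symm T' (mem_filter.1 hT').1 S₀ hS₀'.1)
                have hxg : x ≠ g := fun h => hS₀'.2 (h ▸ hxS)
                exact (disjoint_left.1 hd (mem_erase.2 ⟨hxg, hxT⟩)) hxS)
            rwa [hG', hS₀card, show p + b + 1 - (b+1) = p from by omega] at this
          omega
      · -- B₁ empty
        rw [not_nonempty_iff_eq_empty] at hB1
        have hB1card : B₁.card = 0 := by rw [hB1]; rfl
        obtain ⟨T₀, hT₀⟩ := hB0ne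
        have hT₀' := mem_filter.1 hT₀
        have hT₀sub : T₀ ⊆ G' := (mem_powersetCard.1 (hsub0 hB' hT₀)).1
        have hT₀card : T₀.card = b + 1 := (mem_powersetCard.1 (hsub0 hB' hT₀)).2
        have J : A₁.card + p.choose b ≤ (p+b+1).choose b := by
          have := meets_bound (G' := G') (T₀ := T₀) hT₀sub (hsub1 hA')
            (by
              intro S hS
              obtain ⟨S', hS', rfl⟩ := mem_image.1 hS
              intro hd
              obtain ⟨x, hxS, hxT⟩ := not_disjoint_iff.1
                (hx' S' (mem_filter.1 hS').1 T₀ hT₀'.1)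
              have hxg : x ≠ g := fun h => hT₀'.2 (h ▸ hxT)
              exact (disjoint_left.1 hd (mem_erase.2 ⟨hxg, hxS⟩)) hxT)
          rwa [hG', hT₀card, show p + b + 1 - (b+1) = p from by omega] at this
        omega

end HiltonCross


lemma cprof_pair_eval {V : Type*} [DecidableEq V] {r : ℕ} (c : Finset V → Fin r)
    {e f : Finset V} (hef : e ≠ f) (i : Fin r) :
    cprof c {e, f} i = (if c e = i then 1 else 0) + (if c f = i then 1 else 0) := by
  unfold cprof
  rw [filter_insert, filter_singleton]
  split_ifs with h1 h2 h2
  · rw [card_insert_of_notMem (by simp [hef]), card_singleton]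
  · simp
  · simp
  · simp

lemma pair_profile {V : Type*} [DecidableEq V] {r : ℕ} (c : Finset V → Fin r)
    {e f e' f' : Finset V} (hef : e ≠ f) (hef' : e' ≠ f')
    (h : cprof c {e, f} = cprof c {e', f'}) :
    (c e = c e' ∧ c f = c f') ∨ (c e = c f' ∧ c f = c e') := by
  have key : ∀ i, (if c e = i then (1:ℕ) else 0) + (if c f = i then 1 else 0)
      = (if c e' = i then 1 else 0) + (if c f' = i then 1 else 0) := by
    intro i
    rw [← cprof_pair_eval c hef i, ← cprof_pair_eval c hef' i, h]
  by_cases h1 : c e = c e'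
  · by_cases h2 : c f = c f'
    · exact Or.inl ⟨h1, h2⟩
    · have hk := key (c f)
      rw [if_pos (rfl : c f = c f), if_neg (fun hh : c f' = c f => h2 hh.symm), ← h1] at hk
      split_ifs at hk <;> exact absurd hk (by omega)
  · by_cases h2 : c e = c f'
    · by_cases h3 : c f = c e'
      · exact Or.inr ⟨h2, h3⟩
      · have hk := key (c e')
        rw [if_neg h1, if_neg h3, if_pos (rfl : c e' = c e')] at hk
        split_ifs at hk <;> exact absurd hk (by omega)
    · have hk := key (c e)
      rw [if_pos (rfl : c e = c e), if_neg (fun hh : c e' = c e => h1 hh.symm),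
        if_neg (fun hh : c f' = c e => h2 hh.symm)] at hk
      split_ifs at hk <;> exact absurd hk (by omega)

theorem common_nbhd_same_kind (n k r : ℕ) (hn : 2 * k < n) (hk : 1 ≤ k) (hr : 2 ≤ r)
    (H : Finset (Finset (Fin n))) (hH : HyperUniform k H) (c : Finset (Fin n) → Fin r)
    (hfree : GadgetFree k H c) (u v : Fin n) (huv : u ≠ v)
    (hbig : (((n - 2).choose (k - 1) : ℕ) : ℝ) - (((n - k - 1).choose (k - 1) : ℕ) : ℝ) + 1
      < ((nbr H u ∩ nbr H v).card : ℝ)) :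
    (∀ T ∈ nbr H u ∩ nbr H v, c (insert u T) = c (insert v T)) ∨
      (∃ i j : Fin r, i ≠ j ∧
        ∀ T ∈ nbr H u ∩ nbr H v, c (insert u T) = i ∧ c (insert v T) = j) := by
  classical
  set N := nbr H u ∩ nbr H v with hNdef
  have hmem : ∀ T ∈ N, u ∉ T ∧ insert u T ∈ H ∧ v ∉ T ∧ insert v T ∈ H := by
    intro T hT
    have h1 := (mem_inter.1 hT).1
    have h2 := (mem_inter.1 hT).2
    simp only [nbr, mem_filter, mem_powerset] at h1 h2
    exact ⟨h1.2.1, h1.2.2, h2.2.1, h2.2.2⟩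
  have hcardT : ∀ T ∈ N, T.card = k - 1 := by
    intro T hT
    obtain ⟨h1, h2, h3, h4⟩ := hmem T hT
    have hc := hH _ h2
    rw [card_insert_of_notMem h1] at hc
    omega
  by_cases hk1 : k = 1
  · exfalso
    have hsub : N ⊆ {∅} := by
      intro T hT
      have hc := hcardT T hT
      rw [hk1] at hc
      rw [mem_singleton, ← Finset.card_eq_zero]
      omega
    have hle : N.card ≤ 1 := (card_le_card hsub).trans (by simp)
    rw [hk1] at hbig
    simp only [Nat.sub_self, Nat.choose_zero_right, Nat.cast_one] at hbig
    have h2 : (1:ℝ) < (N.card : ℝ) := by linarith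
    have h3 : 1 < N.card := by exact_mod_cast h2
    omega
  · have hk2 : 2 ≤ k := by omega
    have hagree : ∀ T₁ ∈ N, ∀ T₂ ∈ N, Disjoint T₁ T₂ →
        (c (insert u T₁) = c (insert v T₁) ∧ c (insert u T₂) = c (insert v T₂)) ∨
        (c (insert u T₁) = c (insert u T₂) ∧ c (insert v T₁) = c (insert v T₂)) := by
      intro T₁ hT₁ T₂ hT₂ hd
      obtain ⟨hu1, he1, hv1, hf1⟩ := hmem T₁ hT₁
      obtain ⟨hu2, he2, hv2, hf2⟩ := hmem T₂ hT₂
      have hprof : cprof c {insert u T₁, insert v T₂} = cprof c {insert v T₁, insert u T₂} := by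
        by_contra hne
        exact hfree.1 ⟨u, v, huv, T₁, T₂, (mem_inter.1 hT₁).1, (mem_inter.1 hT₁).2,
          (mem_inter.1 hT₂).1, (mem_inter.1 hT₂).2, hd, hne⟩
      have hne1 : insert u T₁ ≠ insert v T₂ := by
        intro h
        have hm : u ∈ insert v T₂ := h ▸ mem_insert_self u T₁
        rcases mem_insert.1 hm with h' | h'
        exacts [huv h', hu2 h']
      have hne2 : insert v T₁ ≠ insert u T₂ := by
        intro h
        have hm : v ∈ insert u T₂ := h ▸ mem_insert_self v T₁
        rcases mem_insert.1 hm with h' | h'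
        exacts [huv h'.symm, hv2 h']
      rcases pair_profile c hne1 hne2 hprof with ⟨h1, h2⟩ | ⟨h1, h2⟩
      · exact Or.inl ⟨h1, h2.symm⟩
      · exact Or.inr ⟨h1, h2.symm⟩
    set key : Finset (Fin n) → Option (Fin r × Fin r) := fun T =>
      if c (insert u T) = c (insert v T) then none
      else some (c (insert u T), c (insert v T)) with hkey
    have hkeyeq : ∀ T₁ ∈ N, ∀ T₂ ∈ N, Disjoint T₁ T₂ → key T₁ = key T₂ := by
      intro T₁ h₁ T₂ h₂ hd
      rcases hagree T₁ h₁ T₂ h₂ hd with ⟨h1, h2⟩ | ⟨h1, h2⟩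
      · simp only [hkey]
        rw [if_pos h1, if_pos h2]
      · simp only [hkey]
        by_cases hS : c (insert u T₁) = c (insert v T₁)
        · rw [if_pos hS, if_pos (by rw [← h1, ← h2]; exact hS)]
        · rw [if_neg hS, if_neg (by rw [← h1, ← h2]; exact hS), h1, h2]
    by_cases hconst : ∀ T₁ ∈ N, ∀ T₂ ∈ N, key T₁ = key T₂
    · rcases N.eq_empty_or_nonempty with hNe | ⟨T₀, hT₀⟩
      · left
        intro T hT
        rw [hNe] at hT
        exact absurd hT (notMem_empty T)
      · by_cases hS : c (insert u T₀) = c (insert v T₀)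
        · left
          intro T hT
          have hc := hconst T hT T₀ hT₀
          simp only [hkey] at hc
          rw [if_pos hS] at hc
          by_cases h' : c (insert u T) = c (insert v T)
          · exact h'
          · rw [if_neg h'] at hc
            exact absurd hc (by simp)
        · right
          refine ⟨c (insert u T₀), c (insert v T₀), hS, ?_⟩
          intro T hT
          have hc := hconst T hT T₀ hT₀
          simp only [hkey] at hc
          rw [if_neg hS] at hc
          by_cases h' : c (insert u T) = c (insert v T)
          · rw [if_pos h'] at hc
            exact absurd hc (by simp)
          · rw [if_neg h'] at hc
            have hp := Option.some_injective _ hc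
            exact ⟨congrArg Prod.fst hp, congrArg Prod.snd hp⟩
    · exfalso
      push_neg at hconst
      obtain ⟨T₁, hT₁, T₂, hT₂, hkne⟩ := hconst
      set G : Finset (Fin n) := Finset.univ \ {u, v} with hGdef
      have hGcard : G.card = n - 2 := by
        rw [hGdef, card_sdiff_of_subset (subset_univ _), card_univ, Fintype.card_fin]
        rw [show ({u, v} : Finset (Fin n)).card = 2 from by
          rw [card_insert_of_notMem (by simp [huv]), card_singleton]]
      have hNsub : N ⊆ G.powersetCard (k-1) := by
        intro T hT
        obtain ⟨h1, _, h3, _⟩ := hmem T hT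
        refine mem_powersetCard.2 ⟨?_, hcardT T hT⟩
        intro x hx
        simp only [hGdef, mem_sdiff, mem_univ, true_and, mem_insert, mem_singleton]
        push_neg
        exact ⟨fun h => h1 (h ▸ hx), fun h => h3 (h ▸ hx)⟩
      set A := N.filter (fun T => key T = key T₁) with hAdef
      set B := N.filter (fun T => ¬ key T = key T₁) with hBdef
      have hxAB : HiltonCross.XInt A B := by
        intro S hS T hT hd
        have h1 := mem_filter.1 hS
        have h2 := mem_filter.1 hT
        exact h2.2 ((hkeyeq T h2.1 S h1.1 hd.symm).trans h1.2)
      have hAne : A.Nonempty := ⟨T₁, mem_filter.2 ⟨hT₁, rfl⟩⟩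
      have hBne : B.Nonempty := ⟨T₂, mem_filter.2 ⟨hT₂, fun h => hkne h.symm⟩⟩
      have hmain := HiltonCross.hilton (n-2) G hGcard (k-1) (by omega) (by omega)
        A B ((filter_subset _ N).trans hNsub) ((filter_subset _ N).trans hNsub)
        hxAB hAne hBne
      have hsplitN : A.card + B.card = N.card :=
        card_filter_add_card_filter_not (s := N) (p := fun T => key T = key T₁)
      have harg : n - 2 - (k-1) = n - k - 1 := by omega
      rw [harg, hsplitN] at hmain
      have hcast : (N.card : ℝ) + ((n-k-1).choose (k-1) : ℕ) ≤ ((n-2).choose (k-1) : ℕ) + 1 := by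
        exact_mod_cast hmain
      linarith
end

section
/- Let n, k, r be integers with n ≥ 2k² and r ≥ 2, let H be an n-vertex k-graph with an r-edge-coloring c: E(H) → {C_1,…,C_r}, assume H contains no good gadget of the first, second, or third kind, and assume δ(H) > (1/2)·C(n−1,k−1) + ((k²+1)/2)·C(n−2,k−2). Then every ordered pair (u,v) of distinct vertices of H has exactly one type: it is either type S or type C_iC_j for exactly one ordered pair (i,j) with i ≠ j, and it cannot be of two different types. -/
open Finset

lemma mem_nbr {V : Type*} [Fintype V] [DecidableEq V] (H : Finset (Finset V)) (u : V)
    (T : Finset V) : T ∈ nbr H u ↔ u ∉ T ∧ insert u T ∈ H := by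
  simp [nbr]

-- card of a neighborhood element

lemma nbr_card {V : Type*} [Fintype V] [DecidableEq V] {k : ℕ} {H : Finset (Finset V)}
    (hH : HyperUniform k H) {u : V} {T : Finset V} (h : T ∈ nbr H u) : T.card = k - 1 := by
  rw [mem_nbr] at h
  have := hH _ h.2
  rw [card_insert_of_notMem h.1] at this
  omega

-- counting: hdeg u ≤ |Pu| + choose (n-2) (k-2)

lemma deg_le {n k : ℕ} (H : Finset (Finset (Fin n))) (hH : HyperUniform k H)
    (u v : Fin n) (huv : u ≠ v) :
    hdeg H u ≤ ((nbr H u).filter (fun T => v ∉ T)).card + (n - 2).choose (k - 2) := by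
  classical
  have hsplit : (H.filter (fun e => u ∈ e)).card
      = ((H.filter (fun e => u ∈ e)).filter (fun e => v ∈ e)).card
        + ((H.filter (fun e => u ∈ e)).filter (fun e => v ∉ e)).card := by
    rw [card_filter_add_card_filter_not]
  have h1 : ((H.filter (fun e => u ∈ e)).filter (fun e => v ∉ e)).card
      ≤ ((nbr H u).filter (fun T => v ∉ T)).card := by
    apply Finset.card_le_card_of_injOn (fun e => e.erase u)
    · intro e he
      simp only [mem_coe, mem_filter, mem_nbr] at he ⊢
      obtain ⟨⟨heH, hue⟩, hve⟩ := he
      refine ⟨⟨notMem_erase _ _, ?_⟩, fun hv => hve (mem_of_mem_erase hv)⟩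
      rwa [insert_erase hue]
    · intro e he f hf hef
      simp only [mem_coe, mem_filter] at he hf
      dsimp only at hef
      rw [← insert_erase he.1.2, ← insert_erase hf.1.2, hef]
  have h2 : ((H.filter (fun e => u ∈ e)).filter (fun e => v ∈ e)).card
      ≤ (n - 2).choose (k - 2) := by
    have : ((H.filter (fun e => u ∈ e)).filter (fun e => v ∈ e)).card
        ≤ (Finset.powersetCard (k - 2) ((Finset.univ.erase u).erase v)).card := by
      apply Finset.card_le_card_of_injOn (fun e => (e.erase u).erase v)
      · intro e he
        simp only [mem_coe, mem_filter] at he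
        obtain ⟨⟨heH, hue⟩, hve⟩ := he
        rw [mem_coe, Finset.mem_powersetCard]
        constructor
        · intro x hx
          simp only [mem_erase] at hx ⊢
          exact ⟨hx.1, hx.2.1, mem_univ x⟩
        · rw [card_erase_of_mem (mem_erase.mpr ⟨Ne.symm huv, hve⟩),
            card_erase_of_mem hue, hH _ heH]
          omega
      · intro e he f hf hef
        simp only [mem_coe, mem_filter] at he hf
        have he' : e = insert u (insert v ((e.erase u).erase v)) := by
          rw [insert_erase (mem_erase.mpr ⟨Ne.symm huv, he.2⟩), insert_erase he.1.2]
        have hf' : f = insert u (insert v ((f.erase u).erase v)) := by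
          rw [insert_erase (mem_erase.mpr ⟨Ne.symm huv, hf.2⟩), insert_erase hf.1.2]
        dsimp only at hef
        rw [he', hf', hef]
    rwa [Finset.card_powersetCard, card_erase_of_mem (mem_erase.mpr ⟨Ne.symm huv, mem_univ v⟩),
      card_erase_of_mem (mem_univ u), card_univ, Fintype.card_fin] at this
  calc hdeg H u = _ := hsplit
  _ ≤ _ := by omega

lemma nbr_inter_big {n k : ℕ} (hk : 2 ≤ k) (hn : 2 * k ^ 2 ≤ n)
    (H : Finset (Finset (Fin n))) (hH : HyperUniform k H) (u v : Fin n) (huv : u ≠ v)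
    (hdu : (1 / 2 : ℝ) * (((n - 1).choose (k - 1) : ℕ) : ℝ) +
        (((k ^ 2 + 1 : ℕ) : ℝ) / 2) * (((n - 2).choose (k - 2) : ℕ) : ℝ) < (hdeg H u : ℝ))
    (hdv : (1 / 2 : ℝ) * (((n - 1).choose (k - 1) : ℕ) : ℝ) +
        (((k ^ 2 + 1 : ℕ) : ℝ) / 2) * (((n - 2).choose (k - 2) : ℕ) : ℝ) < (hdeg H v : ℝ)) :
    k ^ 2 * ((n - 2).choose (k - 2)) < (nbr H u ∩ nbr H v).card := by
  classical
  set Pu := (nbr H u).filter (fun T => v ∉ T) with hPu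
  set Pv := (nbr H v).filter (fun T => u ∉ T) with hPv
  have hN : nbr H u ∩ nbr H v = Pu ∩ Pv := by
    ext T
    simp only [mem_inter, hPu, hPv, mem_filter, mem_nbr]
    tauto
  have hW : Pu ∪ Pv ⊆ Finset.powersetCard (k - 1) ((Finset.univ.erase u).erase v) := by
    intro T hT
    rw [Finset.mem_powersetCard]
    rcases mem_union.mp hT with h | h <;> rw [hPu] at * <;> rw [hPv] at * <;>
      simp only [mem_filter, mem_nbr] at h
    · refine ⟨fun x hx => ?_, ?_⟩
      · simp only [mem_erase]
        exact ⟨fun he => h.2 (he ▸ hx), fun he => h.1.1 (he ▸ hx), mem_univ x⟩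
      · exact nbr_card hH (by rw [mem_nbr]; exact h.1)
    · refine ⟨fun x hx => ?_, ?_⟩
      · simp only [mem_erase]
        exact ⟨fun he => h.1.1 (he ▸ hx), fun he => h.2 (he ▸ hx), mem_univ x⟩
      · exact nbr_card hH (by rw [mem_nbr]; exact h.1)
  have hWcard : (Pu ∪ Pv).card ≤ (n - 2).choose (k - 1) := by
    have := card_le_card hW
    rwa [Finset.card_powersetCard, card_erase_of_mem (mem_erase.mpr ⟨Ne.symm huv, mem_univ v⟩),
      card_erase_of_mem (mem_univ u), card_univ, Fintype.card_fin] at this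
  have hkey : Pu.card + Pv.card = (Pu ∪ Pv).card + (Pu ∩ Pv).card :=
    (card_union_add_card_inter _ _).symm
  have hdu' := deg_le H hH u v huv
  have hdv' := deg_le H hH v u huv.symm
  rw [← hPu] at hdu'
  rw [← hPv] at hdv'
  have hnat : hdeg H u + hdeg H v ≤
      (Pu ∩ Pv).card + (n - 2).choose (k - 1) + 2 * ((n - 2).choose (k - 2)) := by omega
  have hp : (n - 1).choose (k - 1) = (n - 2).choose (k - 2) + (n - 2).choose (k - 1) := by
    have hn8 : 8 ≤ n := by nlinarith
    have h1 : n - 1 = (n - 2) + 1 := by omega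
    have h2 : k - 1 = (k - 2) + 1 := by omega
    rw [h1, h2, Nat.choose_succ_succ]
  rw [hN]
  have hcast : ((k : ℝ) ^ 2 * ((n - 2).choose (k - 2) : ℕ)) < ((Pu ∩ Pv).card : ℝ) := by
    have hc1 : ((hdeg H u : ℕ) : ℝ) + ((hdeg H v : ℕ) : ℝ) ≤
        ((Pu ∩ Pv).card : ℝ) + ((n - 2).choose (k - 1) : ℕ) +
          2 * (((n - 2).choose (k - 2) : ℕ) : ℝ) := by exact_mod_cast hnat
    have hc2 : (((n - 1).choose (k - 1) : ℕ) : ℝ) =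
        ((n - 2).choose (k - 2) : ℕ) + (((n - 2).choose (k - 1) : ℕ) : ℝ) := by
      exact_mod_cast hp
    push_cast at hdu hdv
    linarith
  exact_mod_cast hcast

lemma cprof_pair {V : Type*} [DecidableEq (Finset V)] {r : ℕ} (c : Finset V → Fin r)
    (e₁ e₂ : Finset V) (h : e₁ ≠ e₂) (i : Fin r) :
    cprof c {e₁, e₂} i = (if c e₁ = i then 1 else 0) + (if c e₂ = i then 1 else 0) := by
  simp only [cprof, filter_insert, filter_singleton]
  split <;> split <;> simp_all [card_insert_of_notMem, h]

lemma color_dichotomy {r : ℕ} (a b a' b' : Fin r)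
    (h : ∀ i : Fin r, (if a = i then 1 else 0) + (if b' = i then 1 else 0)
        = (if b = i then 1 else 0) + (if a' = i then 1 else 0)) :
    (a = b ∧ a' = b') ∨ (a = a' ∧ b = b') := by
  have ha := h a
  have hb' := h b'
  split_ifs at ha hb' <;> omega

lemma sameclass_of_disjoint {n r : ℕ} {H : Finset (Finset (Fin n))} {c : Finset (Fin n) → Fin r}
    (hg1 : ¬ Gadget1 H c) {u v : Fin n} (huv : u ≠ v) {T₁ T₂ : Finset (Fin n)}
    (h1 : T₁ ∈ nbr H u ∩ nbr H v) (h2 : T₂ ∈ nbr H u ∩ nbr H v) (hd : Disjoint T₁ T₂) :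
    (c (insert u T₁) = c (insert v T₁) ∧ c (insert u T₂) = c (insert v T₂)) ∨
      (c (insert u T₁) = c (insert u T₂) ∧ c (insert v T₁) = c (insert v T₂)) := by
  rw [mem_inter] at h1 h2
  have hcp : cprof c {insert u T₁, insert v T₂} = cprof c {insert v T₁, insert u T₂} := by
    by_contra hne
    exact hg1 ⟨u, v, huv, T₁, T₂, h1.1, h1.2, h2.1, h2.2, hd, hne⟩
  have hne1 : insert u T₁ ≠ insert v T₂ := by
    intro h
    have hu : u ∈ insert v T₂ := h ▸ mem_insert_self u T₁
    rcases mem_insert.mp hu with h' | h'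
    · exact huv h'
    · exact ((mem_nbr _ _ _).mp h2.1).1 h'
  have hne2 : insert v T₁ ≠ insert u T₂ := by
    intro h
    have hv : v ∈ insert u T₂ := h ▸ mem_insert_self v T₁
    rcases mem_insert.mp hv with h' | h'
    · exact huv h'.symm
    · exact ((mem_nbr _ _ _).mp h2.2).1 h'
  apply color_dichotomy
  intro i
  rw [← cprof_pair c _ _ hne1 i, ← cprof_pair c _ _ hne2 i, hcp]

lemma exists_avoiding {n k : ℕ} (hk : 2 ≤ k) {H : Finset (Finset (Fin n))}
    (hH : HyperUniform k H) {u v : Fin n}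
    (huv : u ≠ v)
    (hbig : k ^ 2 * ((n - 2).choose (k - 2)) < (nbr H u ∩ nbr H v).card)
    (T₁ T₂ : Finset (Fin n)) (h1 : T₁ ∈ nbr H u ∩ nbr H v) (h2 : T₂ ∈ nbr H u ∩ nbr H v) :
    ∃ T₃ ∈ nbr H u ∩ nbr H v, Disjoint T₃ T₁ ∧ Disjoint T₃ T₂ := by
  classical
  set N := nbr H u ∩ nbr H v with hNdef
  have hmemN : ∀ T ∈ N, u ∉ T ∧ v ∉ T ∧ T.card = k - 1 := by
    intro T hT
    rw [hNdef, mem_inter] at hT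
    exact ⟨((mem_nbr _ _ _).mp hT.1).1, ((mem_nbr _ _ _).mp hT.2).1, nbr_card hH hT.1⟩
  have hsub : N.filter (fun T => ¬ Disjoint T (T₁ ∪ T₂)) ⊆
      (T₁ ∪ T₂).biUnion (fun w => N.filter (fun T => w ∈ T)) := by
    intro T hT
    rw [mem_filter] at hT
    obtain ⟨w, hw1, hw2⟩ := Finset.not_disjoint_iff.mp hT.2
    exact mem_biUnion.mpr ⟨w, hw2, mem_filter.mpr ⟨hT.1, hw1⟩⟩
  have hwbound : ∀ w ∈ T₁ ∪ T₂, (N.filter (fun T => w ∈ T)).card ≤ (n - 2).choose (k - 2) := by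
    intro w hw
    have hwu : w ≠ u := by
      rcases mem_union.mp hw with h | h
      · exact fun he => (hmemN _ h1).1 (he ▸ h)
      · exact fun he => (hmemN _ h2).1 (he ▸ h)
    have hwv : w ≠ v := by
      rcases mem_union.mp hw with h | h
      · exact fun he => (hmemN _ h1).2.1 (he ▸ h)
      · exact fun he => (hmemN _ h2).2.1 (he ▸ h)
    have : (N.filter (fun T => w ∈ T)).card ≤
        (Finset.powersetCard (k - 2) ((Finset.univ.erase u).erase v)).card := by
      apply Finset.card_le_card_of_injOn (fun T => T.erase w)
      · intro T hT
        rw [mem_coe, mem_filter] at hT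
        obtain ⟨hTN, hwT⟩ := hT
        obtain ⟨hu, hv, hc⟩ := hmemN _ hTN
        rw [mem_coe, Finset.mem_powersetCard]
        refine ⟨fun x hx => ?_, ?_⟩
        · rw [mem_erase] at hx
          simp only [mem_erase]
          exact ⟨fun he => hv (he ▸ hx.2), fun he => hu (he ▸ hx.2), mem_univ x⟩
        · rw [card_erase_of_mem hwT, hc]
          omega
      · intro T hT T' hT' he
        simp only [mem_coe, mem_filter] at hT hT'
        dsimp only at he
        rw [← insert_erase hT.2, ← insert_erase hT'.2, he]
    rwa [Finset.card_powersetCard, card_erase_of_mem (mem_erase.mpr ⟨Ne.symm huv, mem_univ v⟩),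
      card_erase_of_mem (mem_univ u), card_univ, Fintype.card_fin] at this
  have hbad : (N.filter (fun T => ¬ Disjoint T (T₁ ∪ T₂))).card
      ≤ (2 * (k - 1)) * ((n - 2).choose (k - 2)) := by
    calc (N.filter (fun T => ¬ Disjoint T (T₁ ∪ T₂))).card
        ≤ ((T₁ ∪ T₂).biUnion (fun w => N.filter (fun T => w ∈ T))).card := card_le_card hsub
      _ ≤ ∑ w ∈ T₁ ∪ T₂, (N.filter (fun T => w ∈ T)).card := card_biUnion_le
      _ ≤ (T₁ ∪ T₂).card * ((n - 2).choose (k - 2)) := by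
          rw [← smul_eq_mul]
          exact Finset.sum_le_card_nsmul _ _ _ hwbound
      _ ≤ (2 * (k - 1)) * ((n - 2).choose (k - 2)) := by
          apply Nat.mul_le_mul_right
          calc (T₁ ∪ T₂).card ≤ T₁.card + T₂.card := card_union_le _ _
            _ ≤ 2 * (k - 1) := by
                rw [(hmemN _ h1).2.2, (hmemN _ h2).2.2]; omega
  have hle : (2 * (k - 1)) * ((n - 2).choose (k - 2)) ≤ k ^ 2 * ((n - 2).choose (k - 2)) := by
    apply Nat.mul_le_mul_right
    have : k * 2 ≤ k * k := Nat.mul_le_mul_left k hk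
    have hkk : k ^ 2 = k * k := sq k
    omega
  have hpos : 0 < (N.filter (fun T => Disjoint T (T₁ ∪ T₂))).card := by
    have := card_filter_add_card_filter_not (s := N)
      (p := fun T => Disjoint T (T₁ ∪ T₂))
    omega
  obtain ⟨T₃, hT₃⟩ := card_pos.mp hpos
  rw [mem_filter] at hT₃
  rw [disjoint_union_right] at hT₃
  exact ⟨T₃, hT₃.1, hT₃.2⟩

lemma class_const {n k r : ℕ} (hk : 2 ≤ k) {H : Finset (Finset (Fin n))}
    (hH : HyperUniform k H) {c : Finset (Fin n) → Fin r} (hg1 : ¬ Gadget1 H c)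
    {u v : Fin n} (huv : u ≠ v)
    (hbig : k ^ 2 * ((n - 2).choose (k - 2)) < (nbr H u ∩ nbr H v).card)
    {T₁ T₂ : Finset (Fin n)} (h1 : T₁ ∈ nbr H u ∩ nbr H v) (h2 : T₂ ∈ nbr H u ∩ nbr H v) :
    (c (insert u T₁) = c (insert v T₁) ∧ c (insert u T₂) = c (insert v T₂)) ∨
      (c (insert u T₁) = c (insert u T₂) ∧ c (insert v T₁) = c (insert v T₂)) := by
  obtain ⟨T₃, h3, hd1, hd2⟩ := exists_avoiding hk hH huv hbig T₁ T₂ h1 h2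
  have s13 := sameclass_of_disjoint hg1 huv h1 h3 hd1.symm
  have s23 := sameclass_of_disjoint hg1 huv h2 h3 hd2.symm
  rcases s13 with a | a <;> rcases s23 with b | b
  · exact Or.inl ⟨a.1, b.1⟩
  · exact Or.inl ⟨a.1, by rw [b.1, b.2]; exact a.2⟩
  · exact Or.inl ⟨a.1.trans (b.2.trans a.2.symm), b.1⟩
  · exact Or.inr ⟨a.1.trans b.1.symm, a.2.trans b.2.symm⟩

theorem unique_type (n k r : ℕ) (hn : 2 * k ^ 2 ≤ n) (hr : 2 ≤ r)
    (H : Finset (Finset (Fin n))) (hH : HyperUniform k H) (c : Finset (Fin n) → Fin r)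
    (hfree : GadgetFree k H c)
    (hdegree : ∀ v : Fin n,
      (1 / 2 : ℝ) * (((n - 1).choose (k - 1) : ℕ) : ℝ) +
        (((k ^ 2 + 1 : ℕ) : ℝ) / 2) * (((n - 2).choose (k - 2) : ℕ) : ℝ) < (hdeg H v : ℝ))
    (u v : Fin n) (huv : u ≠ v) :
    (TypeS k H c u v ∧ ∀ i j : Fin r, i ≠ j → ¬ TypeCC k H c i j u v) ∨
      (¬ TypeS k H c u v ∧
        ∃! p : Fin r × Fin r, p.1 ≠ p.2 ∧ TypeCC k H c p.1 p.2 u v) := by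
  have hg1 := hfree.1
  classical
  by_cases hk : 2 ≤ k
  case neg =>
    exfalso
    have h1 : hdeg H u ≤ 1 := by
      have hsub : H.filter (fun e => u ∈ e) ⊆ {{u}} := by
        intro e he
        rw [mem_filter] at he
        have hcard := hH e he.1
        have hpos : 1 ≤ e.card := one_le_card.mpr ⟨u, he.2⟩
        have hk1 : e.card = 1 := by omega
        obtain ⟨a, ha⟩ := Finset.card_eq_one.mp hk1
        rw [mem_singleton, ha]
        rw [ha, mem_singleton] at he
        rw [he.2]
      exact (card_le_card hsub).trans (by simp)
    have hd := hdegree u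
    have e1 : k - 1 = 0 := by omega
    have e2 : k - 2 = 0 := by omega
    rw [e1, e2, Nat.choose_zero_right, Nat.choose_zero_right] at hd
    have h1' : (hdeg H u : ℝ) ≤ 1 := by exact_mod_cast h1
    have h2' : (0 : ℝ) ≤ (k : ℝ) ^ 2 := by positivity
    push_cast at hd
    linarith
  case pos =>
  have hbig := nbr_inter_big hk hn H hH u v huv (hdegree u) (hdegree v)
  have hkn : k ≤ n := by nlinarith
  have hC2pos : 0 < (n - 2).choose (k - 2) := Nat.choose_pos (by omega)
  have hthpos : 0 < k ^ 2 * ((n - 2).choose (k - 2)) := by positivity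
  by_cases hS : ∀ T ∈ nbr H u ∩ nbr H v, c (insert u T) = c (insert v T)
  · left
    constructor
    · unfold TypeS
      rw [Fintype.card_fin, filter_eq_self.mpr hS]
      exact hbig.le
    · intro i j hij hcc
      unfold TypeCC at hcc
      rw [Fintype.card_fin] at hcc
      have hempty : (nbr H u ∩ nbr H v).filter
          (fun T => c (insert u T) = i ∧ c (insert v T) = j) = ∅ := by
        rw [filter_eq_empty_iff]
        rintro T hT ⟨ha, hb⟩
        exact hij ((ha.symm.trans (hS T hT)).trans hb)
      rw [hempty, card_empty] at hcc
      omega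
  · right
    push_neg at hS
    obtain ⟨T₀, hT₀, hne⟩ := hS
    have hall : ∀ T ∈ nbr H u ∩ nbr H v,
        c (insert u T) = c (insert u T₀) ∧ c (insert v T) = c (insert v T₀) := by
      intro T hT
      rcases class_const hk hH hg1 huv hbig hT hT₀ with a | a
      · exact absurd a.2 hne
      · exact a
    constructor
    · intro hTS
      unfold TypeS at hTS
      rw [Fintype.card_fin] at hTS
      have hempty : (nbr H u ∩ nbr H v).filter
          (fun T => c (insert u T) = c (insert v T)) = ∅ := by
        rw [filter_eq_empty_iff]
        intro T hT ha
        obtain ⟨h1, h2⟩ := hall T hT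
        exact hne ((h1.symm.trans ha).trans h2)
      rw [hempty, card_empty] at hTS
      omega
    · refine ⟨(c (insert u T₀), c (insert v T₀)), ⟨hne, ?_⟩, ?_⟩
      · unfold TypeCC
        rw [Fintype.card_fin, filter_eq_self.mpr hall]
        exact hbig.le
      · rintro ⟨i, j⟩ ⟨hij, hcc⟩
        unfold TypeCC at hcc
        rw [Fintype.card_fin] at hcc
        have hne' : ((nbr H u ∩ nbr H v).filter
            (fun T => c (insert u T) = i ∧ c (insert v T) = j)).Nonempty := by
          rw [← card_pos]
          exact lt_of_lt_of_le hthpos hcc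
        obtain ⟨T, hT⟩ := hne'
        rw [mem_filter] at hT
        obtain ⟨hTN, ha, hb⟩ := hT
        obtain ⟨h1, h2⟩ := hall T hTN
        simp only [Prod.mk.injEq]
        exact ⟨ha.symm.trans h1, hb.symm.trans h2⟩
end

section
/- Let k ≥ 3 and r ≥ 2 be integers, let V = (V_1,…,V_r) be an r-tuple of nonempty disjoint sets with |V_i| = n_i, and let a = (a_1,…,a_r) ∈ ℕ^r_{k−1}. Then for every j ∈ [r] and every vertex v ∈ V_j, the degree of v in H(V,a) equals Σ_{ℓ ∈ [r], ℓ ≠ j} C(n_j − 1, a_j − 1)·C(n_ℓ, a_ℓ + 1)·∏_{i ∈ [r], i ≠ j, i ≠ ℓ} C(n_i, a_i) + C(n_j − 1, a_j)·∏_{i ∈ [r], i ≠ j} C(n_i, a_i), with the convention C(m, −1) = 0. -/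
open Finset

def IsVec (k r : ℕ) (a : ℕ → ℕ) : Prop :=
  (∀ i j : ℕ, i ≤ j → j < r → a i ≤ a j) ∧ (∑ i ∈ Finset.range r, a i) = k - 1

noncomputable def gfun (k r : ℕ) (a : ℕ → ℕ) : ℝ :=
  (((k - 1).factorial : ℝ) / (∏ i ∈ Finset.range r, ((a i).factorial : ℝ))) *
    (∏ i ∈ Finset.range r, (((r * a i + 1 : ℕ) : ℝ) / ((r * k : ℕ) : ℝ)) ^ (a i)) *
    (1 + ((a 0 : ℝ) / ((r * a 0 + 1 : ℕ) : ℝ)) *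
      ∑ i ∈ Finset.Ico 1 r, ((r * a i + 1 : ℕ) : ℝ) / ((a i + 1 : ℕ) : ℝ))

noncomputable def gThr (k r : ℕ) : ℝ :=
  sSup {x : ℝ | ∃ a : ℕ → ℕ, IsVec k r a ∧ x = gfun k r a}

lemma countB {W : Type*} [DecidableEq W] (b : ℕ → ℕ) (s : Finset ℕ) (P : ℕ → Finset W) :
    ∀ _ : (∀ i ∈ s, ∀ j ∈ s, i ≠ j → Disjoint (P i) (P j)),
    ((s.biUnion P).powerset.filter (fun e => ∀ i ∈ s, (e ∩ P i).card = b i)).card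
      = ∏ i ∈ s, (P i).card.choose (b i) := by
  classical
  induction s using Finset.induction_on with
  | empty => intro _; simp
  | @insert a s ha ih =>
    intro hdisj
    have hdisj' : ∀ i ∈ s, ∀ j ∈ s, i ≠ j → Disjoint (P i) (P j) := fun i hi j hj hij =>
      hdisj i (mem_insert_of_mem hi) j (mem_insert_of_mem hj) hij
    have hPa : ∀ i ∈ s, Disjoint (P a) (P i) := fun i hi =>
      hdisj a (mem_insert_self a s) i (mem_insert_of_mem hi) (fun h => ha (h ▸ hi))
    have key : (((insert a s).biUnion P).powerset.filter
          (fun e => ∀ i ∈ insert a s, (e ∩ P i).card = b i)).card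
        = (((P a).powersetCard (b a)) ×ˢ
            ((s.biUnion P).powerset.filter (fun e => ∀ i ∈ s, (e ∩ P i).card = b i))).card := by
      apply Finset.card_nbij' (fun e => (e ∩ P a, e \ P a)) (fun p => p.1 ∪ p.2)
      · intro e he
        rw [mem_coe, mem_filter, mem_powerset, biUnion_insert] at he
        obtain ⟨hsub, hcard⟩ := he
        rw [mem_coe, mem_product]
        constructor
        · rw [mem_powersetCard]
          exact ⟨inter_subset_right, hcard a (mem_insert_self a s)⟩
        · rw [mem_filter, mem_powerset]
          constructor
          · intro x hx
            rw [mem_sdiff] at hx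
            rcases mem_union.mp (hsub hx.1) with h | h
            · exact absurd h hx.2
            · exact h
          · intro i hi
            have : (e \ P a) ∩ P i = e ∩ P i := by
              ext x
              simp only [mem_inter, mem_sdiff]
              constructor
              · rintro ⟨⟨h1, _⟩, h2⟩; exact ⟨h1, h2⟩
              · rintro ⟨h1, h2⟩
                exact ⟨⟨h1, fun hxa => (Finset.disjoint_left.mp (hPa i hi)) hxa h2⟩, h2⟩
            rw [this]
            exact hcard i (mem_insert_of_mem hi)
      · intro p hp
        rw [mem_coe, mem_product] at hp
        obtain ⟨hp1, hp2⟩ := hp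
        rw [mem_powersetCard] at hp1
        rw [mem_filter, mem_powerset] at hp2
        have h1a : p.1 ∩ P a = p.1 := inter_eq_left.mpr hp1.1
        have h2a : p.2 ∩ P a = ∅ := by
          rw [← Finset.disjoint_iff_inter_eq_empty]
          refine Finset.disjoint_left.mpr fun x hx hxa => ?_
          obtain ⟨i, hi, hxi⟩ := mem_biUnion.mp (hp2.1 hx)
          exact Finset.disjoint_left.mp (hPa i hi) hxa hxi
        rw [mem_coe, mem_filter, mem_powerset, biUnion_insert]
        constructor
        · exact union_subset_union hp1.1 hp2.1
        · intro i hi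
          rcases mem_insert.mp hi with rfl | hi'
          · rw [union_inter_distrib_right, h1a, h2a, union_empty]
            exact hp1.2
          · have h1i : p.1 ∩ P i = ∅ := by
              rw [← Finset.disjoint_iff_inter_eq_empty]
              exact Finset.disjoint_left.mpr fun x hx hxi =>
                Finset.disjoint_left.mp (hPa i hi') (hp1.1 hx) hxi
            have h2i : p.2 ∩ P i = p.2 ∩ P i := rfl
            rw [union_inter_distrib_right, h1i, empty_union]
            exact hp2.2 i hi'
      · intro e he
        rw [mem_coe, mem_filter, mem_powerset, biUnion_insert] at he
        ext x
        simp only [mem_union, mem_inter, mem_sdiff]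
        tauto
      · intro p hp
        rw [mem_coe, mem_product] at hp
        obtain ⟨hp1, hp2⟩ := hp
        rw [mem_powersetCard] at hp1
        rw [mem_filter, mem_powerset] at hp2
        have h1a : p.1 ∩ P a = p.1 := inter_eq_left.mpr hp1.1
        have hdis : Disjoint p.2 (P a) := by
          refine Finset.disjoint_left.mpr fun x hx hxa => ?_
          obtain ⟨i, hi, hxi⟩ := mem_biUnion.mp (hp2.1 hx)
          exact Finset.disjoint_left.mp (hPa i hi) hxa hxi
        have : (p.1 ∪ p.2) ∩ P a = p.1 := by
          rw [union_inter_distrib_right, h1a, Finset.disjoint_iff_inter_eq_empty.mp hdis,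
            union_empty]
        have h2 : (p.1 ∪ p.2) \ P a = p.2 := by
          rw [union_sdiff_distrib, sdiff_eq_empty_iff_subset.mpr hp1.1,
            Finset.sdiff_eq_self_of_disjoint hdis, empty_union]
        ext <;> simp [this, h2]
    rw [key, card_product, card_powersetCard, ih hdisj', prod_insert ha]

lemma countA {W : Type*} [DecidableEq W] (b : ℕ → ℕ) (s : Finset ℕ) (P : ℕ → Finset W)
    (hdisj : ∀ i ∈ s, ∀ j ∈ s, i ≠ j → Disjoint (P i) (P j))
    (j : ℕ) (hj : j ∈ s) (v : W) (hv : v ∈ P j) :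
    ((s.biUnion P).powerset.filter (fun e => v ∈ e ∧ ∀ i ∈ s, (e ∩ P i).card = b i)).card
      = (if b j = 0 then 0 else ((P j).card - 1).choose (b j - 1)) *
        ∏ i ∈ s.erase j, (P i).card.choose (b i) := by
  classical
  by_cases h0 : b j = 0
  · rw [h0, if_pos rfl, zero_mul]
    rw [Finset.card_eq_zero, Finset.filter_eq_empty_iff]
    rintro e _ ⟨hve, hall⟩
    have := hall j hj
    rw [h0, Finset.card_eq_zero] at this
    exact absurd (this ▸ mem_inter.mpr ⟨hve, hv⟩) (Finset.notMem_empty v)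
  · rw [if_neg h0]
    set Q : ℕ → Finset W := fun i => if i = j then (P j).erase v else P i with hQ
    set b' : ℕ → ℕ := fun i => if i = j then b j - 1 else b i with hb'
    have hQsub : ∀ i, Q i ⊆ P i := by
      intro i
      by_cases hij : i = j <;> simp [hQ, hij, erase_subset]
    have hQdisj : ∀ i ∈ s, ∀ l ∈ s, i ≠ l → Disjoint (Q i) (Q l) := fun i hi l hl hil =>
      ((hdisj i hi l hl hil).mono (hQsub i) (hQsub l))
    have hvQ : ∀ i ∈ s, v ∉ Q i := by
      intro i hi
      by_cases hij : i = j
      · simp [hQ, hij]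
      · simp only [hQ, if_neg hij]
        exact fun h => Finset.disjoint_left.mp (hdisj i hi j hj hij) h hv
    have key : ((s.biUnion P).powerset.filter
          (fun e => v ∈ e ∧ ∀ i ∈ s, (e ∩ P i).card = b i)).card
        = ((s.biUnion Q).powerset.filter (fun e => ∀ i ∈ s, (e ∩ Q i).card = b' i)).card := by
      apply Finset.card_nbij' (fun e => e.erase v) (fun f => insert v f)
      · intro e he
        rw [mem_coe, mem_filter, mem_powerset] at he
        obtain ⟨hsub, hve, hall⟩ := he
        rw [mem_coe, mem_filter, mem_powerset]
        constructor
        · intro x hx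
          rw [mem_erase] at hx
          obtain ⟨i, hi, hxi⟩ := mem_biUnion.mp (hsub hx.2)
          refine mem_biUnion.mpr ⟨i, hi, ?_⟩
          by_cases hij : i = j
          · subst hij; simp [hQ, mem_erase, hx.1, hxi]
          · simpa [hQ, hij] using hxi
        · intro i hi
          by_cases hij : i = j
          · subst hij
            have : e.erase v ∩ Q i = (e ∩ P i).erase v := by
              simp only [hQ, if_pos rfl]
              ext x; simp only [mem_inter, mem_erase]; tauto
            rw [this, Finset.card_erase_of_mem (mem_inter.mpr ⟨hve, hv⟩), hall i hi]
            simp [hb']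
          · have : e.erase v ∩ Q i = e ∩ P i := by
              simp only [hQ, if_neg hij]
              ext x
              simp only [mem_inter, mem_erase]
              constructor
              · tauto
              · rintro ⟨h1, h2⟩
                exact ⟨⟨fun hxv => (hvQ i hi) (by simpa [hQ, hij, hxv] using h2), h1⟩, h2⟩
            rw [this]
            simpa [hb', hij] using hall i hi
      · intro f hf
        rw [mem_coe, mem_filter, mem_powerset] at hf
        obtain ⟨hsub, hall⟩ := hf
        have hvf : v ∉ f := by
          intro hvf
          obtain ⟨i, hi, hxi⟩ := mem_biUnion.mp (hsub hvf)
          exact hvQ i hi hxi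
        rw [mem_coe, mem_filter, mem_powerset]
        refine ⟨?_, mem_insert_self v f, ?_⟩
        · intro x hx
          rcases mem_insert.mp hx with rfl | hx'
          · exact mem_biUnion.mpr ⟨j, hj, hv⟩
          · obtain ⟨i, hi, hxi⟩ := mem_biUnion.mp (hsub hx')
            exact mem_biUnion.mpr ⟨i, hi, hQsub i hxi⟩
        · intro i hi
          by_cases hij : i = j
          · subst hij
            have hfi : f ∩ P i = f ∩ Q i := by
              simp only [hQ, if_pos rfl]
              ext x
              simp only [mem_inter, mem_erase]
              exact ⟨fun ⟨h1, h2⟩ => ⟨h1, fun hxv => hvf (hxv ▸ h1), h2⟩, fun ⟨h1, _, h2⟩ => ⟨h1, h2⟩⟩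
            have : insert v f ∩ P i = insert v (f ∩ P i) := by
              rw [insert_inter_of_mem hv]
            rw [this, hfi, Finset.card_insert_of_notMem (fun h => hvf (mem_inter.mp h).1),
              hall i hi]
            simp only [hb', if_pos rfl]
            omega
          · have : insert v f ∩ P i = f ∩ Q i := by
              rw [insert_inter_of_notMem
                (Finset.disjoint_left.mp (hdisj j hj i hi (Ne.symm hij)) hv)]
              simp only [hQ, if_neg hij]
            rw [this, hall i hi]
            simp [hb', hij]
      · intro e he
        rw [mem_coe, mem_filter] at he
        exact Finset.insert_erase he.2.1
      · intro f hf
        rw [mem_coe, mem_filter, mem_powerset] at hf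
        apply Finset.erase_insert
        intro hvf
        obtain ⟨i, hi, hxi⟩ := mem_biUnion.mp (hf.1 hvf)
        exact hvQ i hi hxi
    rw [key, countB b' s Q hQdisj]
    rw [← Finset.mul_prod_erase s _ hj]
    congr 1
    · simp only [hQ, hb', if_pos rfl]
      rw [Finset.card_erase_of_mem hv]
    · apply Finset.prod_congr rfl
      intro i hi
      have hij := (Finset.mem_erase.mp hi).1
      simp [hQ, hb', hij]

def HVa {W : Type*} [Fintype W] [DecidableEq W] (r : ℕ) (P : ℕ → Finset W) (a : ℕ → ℕ) :
    Finset (Finset W) :=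
  (Finset.univ : Finset W).powerset.filter (fun e =>
    ∃ i ∈ Finset.range r, (e ∩ P i).card = a i + 1 ∧
      ∀ j ∈ Finset.range r, j ≠ i → (e ∩ P j).card = a j)

theorem degree_formula (k r n : ℕ) (hk : 3 ≤ k) (hr : 2 ≤ r)
    (P : ℕ → Finset (Fin n)) (a : ℕ → ℕ)
    (hdisj : ∀ i j : ℕ, i < r → j < r → i ≠ j → Disjoint (P i) (P j))
    (hcover : ∀ x : Fin n, ∃ i, i < r ∧ x ∈ P i)
    (hne : ∀ i, i < r → (P i).Nonempty)
    (ha : IsVec k r a)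
    (j : ℕ) (hj : j < r) (v : Fin n) (hv : v ∈ P j) :
    hdeg (HVa r P a) v =
      (∑ l ∈ (Finset.range r).erase j,
        (if a j = 0 then 0 else ((P j).card - 1).choose (a j - 1)) *
          ((P l).card.choose (a l + 1)) *
          ∏ i ∈ ((Finset.range r).erase j).erase l, (P i).card.choose (a i)) +
      ((P j).card - 1).choose (a j) * ∏ i ∈ (Finset.range r).erase j, (P i).card.choose (a i) := by
  classical
  have hdisj' : ∀ i ∈ Finset.range r, ∀ l ∈ Finset.range r, i ≠ l → Disjoint (P i) (P l) :=
    fun i hi l hl hil => hdisj i l (mem_range.mp hi) (mem_range.mp hl) hil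
  have hjr : j ∈ Finset.range r := mem_range.mpr hj
  have huniv : (Finset.univ : Finset (Fin n)) = (Finset.range r).biUnion P := by
    ext x
    simp only [mem_univ, mem_biUnion, mem_range, true_iff]
    obtain ⟨i, hi, hxi⟩ := hcover x
    exact ⟨i, hi, hxi⟩
  set b : ℕ → ℕ → ℕ := fun i m => if m = i then a m + 1 else a m with hb
  have hsplit : hdeg (HVa r P a) v
      = ∑ i ∈ Finset.range r,
          (((Finset.range r).biUnion P).powerset.filter
            (fun e => v ∈ e ∧ ∀ m ∈ Finset.range r, (e ∩ P m).card = b i m)).card := by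
    rw [hdeg, HVa, filter_filter, huniv]
    rw [← Finset.card_biUnion]
    · congr 1
      ext e
      simp only [mem_filter, mem_biUnion, mem_powerset]
      constructor
      · rintro ⟨hsub, ⟨i, hi, hcard, hrest⟩, hve⟩
        refine ⟨i, hi, hsub, hve, fun m hm => ?_⟩
        by_cases hmi : m = i
        · subst hmi; simp [hb, hcard]
        · simp only [hb, if_neg hmi]
          exact hrest m hm hmi
      · rintro ⟨i, hi, hsub, hve, hall⟩
        refine ⟨hsub, ⟨i, hi, ?_, fun m hm hmi => ?_⟩, hve⟩
        · simpa [hb] using hall i hi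
        · simpa [hb, hmi] using hall m hm
    · intro i hi i' hi' hii'
      refine Finset.disjoint_left.mpr fun e he he' => ?_
      rw [mem_filter] at he he'
      have h1 := he.2.2 i hi
      have h2 := he'.2.2 i hi
      simp only [hb, if_pos rfl, if_neg (fun h : i = i' => hii' h)] at h1 h2
      omega
  rw [hsplit]
  have hterm : ∀ i ∈ Finset.range r,
      (((Finset.range r).biUnion P).powerset.filter
        (fun e => v ∈ e ∧ ∀ m ∈ Finset.range r, (e ∩ P m).card = b i m)).card
      = (if b i j = 0 then 0 else ((P j).card - 1).choose (b i j - 1)) *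
        ∏ m ∈ (Finset.range r).erase j, (P m).card.choose (b i m) :=
    fun i _ => countA (b i) (Finset.range r) P hdisj' j hjr v hv
  rw [Finset.sum_congr rfl hterm]
  rw [← Finset.add_sum_erase _ _ hjr]
  have hjterm : (if b j j = 0 then 0 else ((P j).card - 1).choose (b j j - 1)) *
        ∏ m ∈ (Finset.range r).erase j, (P m).card.choose (b j m)
      = ((P j).card - 1).choose (a j) * ∏ i ∈ (Finset.range r).erase j, (P i).card.choose (a i) := by
    have h1 : b j j = a j + 1 := by simp [hb]
    rw [h1]
    simp only [Nat.succ_ne_zero, if_false, Nat.add_sub_cancel]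
    congr 1
    apply Finset.prod_congr rfl
    intro m hm
    simp [hb, (Finset.mem_erase.mp hm).1]
  rw [hjterm, add_comm]
  congr 1
  apply Finset.sum_congr rfl
  intro l hl
  have hlj : l ≠ j := (Finset.mem_erase.mp hl).1
  have h1 : b l j = a j := by simp [hb, hlj.symm]
  rw [h1]
  rw [← Finset.mul_prod_erase _ _ hl, ← mul_assoc]
  have h2 : b l l = a l + 1 := by simp [hb]
  rw [h2]
  congr 1
  apply Finset.prod_congr rfl
  intro m hm
  have := (Finset.mem_erase.mp hm).1
  simp [hb, this]
end

section
/- Let r ≥ 2 be an integer and let a_1, a_2, …, a_r be nonnegative integers with a_1 ≤ a_2 ≤ … ≤ a_r. Then for every j with 2 ≤ j ≤ r, it holds that (a_1/(r·a_1 + 1))·Σ_{i=2}^r (r·a_i + 1)/(a_i + 1) ≤ (a_j/(r·a_j + 1))·Σ_{i ∈ [r], i ≠ j} (r·a_i + 1)/(a_i + 1). -/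
open Finset

lemma key_ineq (r x y S : ℝ) (hr : 2 ≤ r) (hx : 0 ≤ x) (hxy : x ≤ y)
    (hS : (r - 2) * ((r * x + 1) / (x + 1)) + (r * y + 1) / (y + 1) ≤ S) :
    x / (r * x + 1) * S ≤
      y / (r * y + 1) * (S - (r * y + 1) / (y + 1) + (r * x + 1) / (x + 1)) := by
  have hy : 0 ≤ y := hx.trans hxy
  have hx1 : (0:ℝ) < x + 1 := by linarith
  have hy1 : (0:ℝ) < y + 1 := by linarith
  have hrx : (0:ℝ) < r * x + 1 := by nlinarith
  have hry : (0:ℝ) < r * y + 1 := by nlinarith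
  have hA : x / (r * x + 1) ≤ y / (r * y + 1) := by
    rw [div_le_div_iff₀ hrx hry]; nlinarith
  have e1 : y / (r * y + 1) - x / (r * x + 1) = (y - x) / ((r * x + 1) * (r * y + 1)) := by
    field_simp; ring
  have e2 : (r * y + 1) / (y + 1) - (r * x + 1) / (x + 1)
      = ((r - 1) * (y - x)) / ((x + 1) * (y + 1)) := by
    field_simp; ring
  have hC : x / (r * x + 1) * ((r * y + 1) / (y + 1) - (r * x + 1) / (x + 1)) ≤
      (y / (r * y + 1) - x / (r * x + 1)) * (((r - 1) * (r * x + 1)) / (x + 1)) := by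
    rw [e1, e2, div_mul_div_comm, div_mul_div_comm,
      div_le_div_iff₀ (by positivity) (by positivity)]
    nlinarith [mul_nonneg (mul_nonneg (mul_nonneg (mul_nonneg
      (by linarith : (0:ℝ) ≤ r - 1) (by linarith : (0:ℝ) ≤ y - x)) hrx.le) hx1.le)
      (by nlinarith : (0:ℝ) ≤ (r - 1) * x + y + 1)]
  have hB : ((r - 1) * (r * x + 1)) / (x + 1) ≤ S - (r * y + 1) / (y + 1) + (r * x + 1) / (x + 1) := by
    have : ((r - 1) * (r * x + 1)) / (x + 1) = (r - 2) * ((r * x + 1) / (x + 1)) + (r * x + 1) / (x + 1) := by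
      field_simp; ring
    linarith
  have hfin := mul_le_mul_of_nonneg_left hB (by linarith : (0:ℝ) ≤ y / (r * y + 1) - x / (r * x + 1))
  nlinarith [hfin, hC]

theorem min_index_inequality (r : ℕ) (hr : 2 ≤ r) (a : ℕ → ℕ)
    (hmono : ∀ i j : ℕ, i ≤ j → j < r → a i ≤ a j)
    (j : ℕ) (hj1 : 1 ≤ j) (hjr : j < r) :
    ((a 0 : ℝ) / ((r * a 0 + 1 : ℕ) : ℝ)) *
        (∑ i ∈ Finset.Ico 1 r, ((r * a i + 1 : ℕ) : ℝ) / ((a i + 1 : ℕ) : ℝ)) ≤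
      ((a j : ℝ) / ((r * a j + 1 : ℕ) : ℝ)) *
        (∑ i ∈ (Finset.range r).erase j, ((r * a i + 1 : ℕ) : ℝ) / ((a i + 1 : ℕ) : ℝ)) := by
  set g : ℕ → ℝ := fun i => ((r * a i + 1 : ℕ) : ℝ) / ((a i + 1 : ℕ) : ℝ) with hg
  set S : ℝ := ∑ i ∈ Finset.Ico 1 r, g i with hSdef
  have hjmem : j ∈ Finset.Ico 1 r := by simp [hj1, hjr]
  -- each g i for i < r is at least g 0
  have hg0le : ∀ i ∈ (Finset.Ico 1 r).erase j, g 0 ≤ g i := by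
    intro i hi
    simp only [mem_erase, Finset.mem_Ico] at hi
    have hai : a 0 ≤ a i := hmono 0 i (Nat.zero_le _) hi.2.2
    simp only [hg]
    rw [div_le_div_iff₀ (by positivity) (by positivity)]
    push_cast
    have hr1 : (1:ℝ) ≤ (r:ℝ) := by exact_mod_cast Nat.one_le_of_lt hr
    have : (a 0 : ℝ) ≤ (a i : ℝ) := by exact_mod_cast hai
    nlinarith [Nat.cast_nonneg (α := ℝ) (a 0)]
  -- split S
  have hsplit : S = g j + ∑ i ∈ (Finset.Ico 1 r).erase j, g i :=
    (Finset.add_sum_erase _ g hjmem).symm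
  have hcard : ((Finset.Ico 1 r).erase j).card = r - 2 := by
    rw [Finset.card_erase_of_mem hjmem, Nat.card_Ico]; omega
  have hSlb : ((r:ℝ) - 2) * g 0 + g j ≤ S := by
    have h1 : ((r - 2 : ℕ) : ℝ) * g 0 ≤ ∑ i ∈ (Finset.Ico 1 r).erase j, g i := by
      have := Finset.card_nsmul_le_sum _ _ _ hg0le
      rwa [hcard, nsmul_eq_mul] at this
    have : ((r - 2 : ℕ) : ℝ) = (r:ℝ) - 2 := by
      have : (2:ℕ) ≤ r := hr
      push_cast [Nat.cast_sub this]; ring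
    linarith [hsplit, h1, this ▸ h1]
  -- erase sum
  have herase : ∑ i ∈ (Finset.range r).erase j, g i = S - g j + g 0 := by
    have h1 : ∑ i ∈ (Finset.range r).erase j, g i = (∑ i ∈ Finset.range r, g i) - g j :=
      Finset.sum_erase_eq_sub (by simp [hjr])
    have h2 : ∑ i ∈ Finset.range r, g i = g 0 + S := by
      rw [Finset.range_eq_Ico, Finset.sum_eq_sum_Ico_succ_bot (by omega : 0 < r)]
    rw [h1, h2]; ring
  rw [herase]
  have ha0j : a 0 ≤ a j := hmono 0 j (Nat.zero_le _) hjr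
  have hR2 : (2:ℝ) ≤ (r:ℝ) := by exact_mod_cast hr
  have hkey := key_ineq (r:ℝ) (a 0 : ℝ) (a j : ℝ) S hR2 (Nat.cast_nonneg _)
    (by exact_mod_cast ha0j)
  have eg0 : g 0 = ((r:ℝ) * (a 0:ℝ) + 1) / ((a 0:ℝ) + 1) := by simp [hg]
  have egj : g j = ((r:ℝ) * (a j:ℝ) + 1) / ((a j:ℝ) + 1) := by simp [hg]
  have hcast0 : ((r * a 0 + 1 : ℕ) : ℝ) = (r:ℝ) * (a 0:ℝ) + 1 := by push_cast; ring
  have hcastj : ((r * a j + 1 : ℕ) : ℝ) = (r:ℝ) * (a j:ℝ) + 1 := by push_cast; ring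
  rw [eg0, egj] at hSlb
  have := hkey (by linarith)
  rw [eg0, egj, hcast0, hcastj]
  linarith [this]
end

section
/- For every integer k ≥ 20 it holds that g_2(k) < 1 − (1 − 1/k)^{k−1}; that is, for all nonnegative integers a ≤ b with a + b = k − 1, C(k−1, a)·((2a+1)/(2k))^a·((2b+1)/(2k))^b·(1 + a(2b+1)/((2a+1)(b+1))) < 1 − (1 − 1/k)^{k−1}. -/
open Finset

lemma nat_choose_ratio (j m n : ℕ) (hmn : m ≤ n) :
    m.choose j * n ^ j ≤ n.choose j * m ^ j := by
  have key : m.descFactorial j * n ^ j ≤ n.descFactorial j * m ^ j := by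
    rw [Nat.descFactorial_eq_prod_range, Nat.descFactorial_eq_prod_range]
    calc (∏ i ∈ range j, (m - i)) * n ^ j = ∏ i ∈ range j, ((m - i) * n) := by
          rw [Finset.prod_mul_distrib, Finset.prod_const, Finset.card_range]
    _ ≤ ∏ i ∈ range j, ((n - i) * m) := by
          apply Finset.prod_le_prod'
          intro i _
          rw [Nat.sub_mul, Nat.sub_mul]
          have h1 : i * m ≤ i * n := Nat.mul_le_mul_left i hmn
          have h2 : m * n = n * m := Nat.mul_comm m n
          omega
    _ = (∏ i ∈ range j, (n - i)) * m ^ j := by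
          rw [Finset.prod_mul_distrib, Finset.prod_const, Finset.card_range]
  rw [Nat.descFactorial_eq_factorial_mul_choose, Nat.descFactorial_eq_factorial_mul_choose] at key
  have hj : 0 < j.factorial := Nat.factorial_pos j
  calc m.choose j * n ^ j = (j.factorial * (m.choose j * n ^ j)) / j.factorial := by
        rw [Nat.mul_div_cancel_left _ hj]
    _ ≤ (j.factorial * (n.choose j * m ^ j)) / j.factorial := by
        apply Nat.div_le_div_right
        calc j.factorial * (m.choose j * n ^ j) = j.factorial * m.choose j * n ^ j := by ring
        _ ≤ j.factorial * n.choose j * m ^ j := by rw [mul_assoc] at key ⊢; exact key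
        _ = j.factorial * (n.choose j * m ^ j) := by ring
    _ = n.choose j * m ^ j := by rw [Nat.mul_div_cancel_left _ hj]

-- Lemma A: (1 + c/m)^m ≤ (1 + c/n)^n for 0 ≤ c, 0 < m ≤ n
lemma lemA (c : ℝ) (hc : 0 ≤ c) {m n : ℕ} (hm : 0 < m) (hmn : m ≤ n) :
    (1 + c / m) ^ m ≤ (1 + c / n) ^ n := by
  have hn : 0 < n := lt_of_lt_of_le hm hmn
  have hmr : (0:ℝ) < m := by exact_mod_cast hm
  have hnr : (0:ℝ) < n := by exact_mod_cast hn
  have expand : ∀ N : ℕ, 0 < N → (1 + c / N) ^ N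
      = ∑ j ∈ range (N + 1), (c / N) ^ j * (N.choose j : ℝ) := by
    intro N hN
    rw [add_comm, add_pow]
    simp [one_pow]
  rw [expand m hm, expand n hn]
  have step1 : ∑ j ∈ range (m + 1), (c / m) ^ j * (m.choose j : ℝ)
      ≤ ∑ j ∈ range (m + 1), (c / n) ^ j * (n.choose j : ℝ) := by
    apply Finset.sum_le_sum
    intro j _
    rw [div_pow, div_pow, div_mul_eq_mul_div, div_mul_eq_mul_div,
      div_le_div_iff₀ (by positivity) (by positivity)]
    have := nat_choose_ratio j m n hmn
    have : (m.choose j : ℝ) * n ^ j ≤ (n.choose j : ℝ) * m ^ j := by exact_mod_cast this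
    calc c ^ j * (m.choose j : ℝ) * (n:ℝ) ^ j = c ^ j * ((m.choose j : ℝ) * (n:ℝ)^j) := by ring
      _ ≤ c ^ j * ((n.choose j : ℝ) * (m:ℝ)^j) := by
          apply mul_le_mul_of_nonneg_left _ (by positivity)
          push_cast at this ⊢
          exact this
      _ = c ^ j * (n.choose j:ℝ) * (m:ℝ) ^ j := by ring
  refine le_trans step1 ?_
  apply Finset.sum_le_sum_of_subset_of_nonneg
  · exact Finset.range_subset_range.mpr (by omega)
  · intro j _ _
    positivity

-- squaring trick bound
lemma hbnd (c s t : ℕ) (hc : 0 < c) (ht : 0 < t) (hts : t ≤ s) :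
    ((2*s+1:ℝ)/(2*s+1+c))^s ≤ ((2*t+1:ℝ)/(2*t+1+c))^t := by
  have hA : (0:ℝ) < 2*(s:ℝ)+1 := by positivity
  have hB : (0:ℝ) < 2*(t:ℝ)+1 := by positivity
  have hcr : (0:ℝ) ≤ (c:ℝ) := Nat.cast_nonneg c
  have hcr' : (0:ℝ) < (c:ℝ) := by exact_mod_cast hc
  set A : ℝ := 2*(s:ℝ)+1 with hAdef
  set B : ℝ := 2*(t:ℝ)+1 with hBdef
  have hBA : B ≤ A := by
    have : (t:ℝ) ≤ (s:ℝ) := by exact_mod_cast hts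
    simp [hAdef, hBdef]; linarith
  have hiden : ∀ X : ℝ, 0 < X → X/(X+c) = (1+(c:ℝ)/X)⁻¹ := by
    intro X hX
    rw [inv_eq_one_div]
    rw [div_eq_div_iff (by positivity) (by positivity)]
    field_simp
  have key2 : (1+(c:ℝ)/B)^(2*t) ≤ (1+(c:ℝ)/A)^(2*s) := by
    have e1 : (1+(c:ℝ)/B)^(2*t) = (1+(c:ℝ)/B)^(2*t+1) / (1+(c:ℝ)/B) := by
      rw [pow_succ]
      field_simp
    have e2 : (1+(c:ℝ)/A)^(2*s) = (1+(c:ℝ)/A)^(2*s+1) / (1+(c:ℝ)/A) := by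
      rw [pow_succ]
      field_simp
    rw [e1, e2]
    apply div_le_div₀ (by positivity)
    · have := lemA (c:ℝ) hcr (m := 2*t+1) (n := 2*s+1) (by omega) (by omega)
      have hcB : ((2*t+1 : ℕ):ℝ) = B := by push_cast [hBdef]; ring
      have hcA : ((2*s+1 : ℕ):ℝ) = A := by push_cast [hAdef]; ring
      rwa [hcB, hcA] at this
    · positivity
    · have : (c:ℝ)/A ≤ (c:ℝ)/B := by
        apply div_le_div_of_nonneg_left hcr hB hBA
      linarith
  have main2 : (A/(A+c))^(2*s) ≤ (B/(B+c))^(2*t) := by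
    rw [hiden A hA, hiden B hB, inv_pow, inv_pow]
    apply inv_anti₀ (by positivity) key2
  have h1 : ((A/(A+c))^s)^2 ≤ ((B/(B+c))^t)^2 := by
    rw [← pow_mul, ← pow_mul, mul_comm s 2, mul_comm t 2]
    exact main2
  exact le_of_pow_le_pow_left₀ two_ne_zero (by positivity) h1

lemma Rbnd (k : ℕ) (hk : 20 ≤ k) : (1 - 1/(k:ℝ))^(k-1) ≤ (19/20:ℝ)^19 := by
  have hk20 : (20:ℝ) ≤ (k:ℝ) := by exact_mod_cast hk
  have hk1 : (1:ℝ) ≤ (k:ℝ) := by linarith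
  have hkpos : (0:ℝ) < k := by linarith
  have hn19 : ((19:ℕ):ℝ) ≤ ((k-1 : ℕ):ℝ) := by
    exact_mod_cast Nat.sub_le_sub_right hk 1
  have hnpos : (0:ℝ) < ((k-1:ℕ):ℝ) := by norm_num at hn19 ⊢; linarith
  have hcast : ((k-1:ℕ):ℝ) = (k:ℝ) - 1 := by
    push_cast [Nat.cast_sub (by omega : 1 ≤ k)]; ring
  have hiden : (1 - 1/(k:ℝ)) = (1 + 1/((k-1:ℕ):ℝ))⁻¹ := by
    rw [hcast]
    have h1 : (k:ℝ) - 1 ≠ 0 := by linarith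
    have h2 : (k:ℝ) ≠ 0 := by linarith
    have h3 : 1 + 1/((k:ℝ)-1) ≠ 0 := by
      have : 0 < 1/((k:ℝ)-1) := by apply div_pos one_pos; linarith
      linarith
    field_simp
    rw [sub_add_cancel, div_self h2]
  rw [hiden, inv_pow]
  have h19 : (1 + (1:ℝ)/((19:ℕ):ℝ))^(19:ℕ) ≤ (1 + 1/((k-1:ℕ):ℝ))^(k-1) := by
    have := lemA (1:ℝ) (by norm_num) (m := 19) (n := k-1) (by norm_num) (by omega)
    simpa using this
  have hpos : (0:ℝ) < (1 + (1:ℝ)/((19:ℕ):ℝ))^(19:ℕ) := by positivity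
  calc ((1 + 1/((k-1:ℕ):ℝ))^(k-1))⁻¹ ≤ ((1 + (1:ℝ)/((19:ℕ):ℝ))^(19:ℕ))⁻¹ :=
        inv_anti₀ hpos h19
    _ = (19/20:ℝ)^19 := by norm_num

noncomputable def Ff (a b : ℕ) : ℝ :=
  (((a+b).choose a : ℕ) : ℝ) * ((a:ℝ)/((a:ℝ)+(b:ℝ)))^a * ((b:ℝ)/((a:ℝ)+(b:ℝ)))^b

lemma choose_le_pow_div (n K j : ℕ) (h : n ≤ K) :
    ((n.choose j : ℕ) : ℝ) ≤ (K:ℝ)^j / (j.factorial : ℝ) := by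
  rw [le_div_iff₀ (by positivity)]
  have h1 : n.choose j * j.factorial ≤ K ^ j := by
    calc n.choose j * j.factorial = j.factorial * n.choose j := Nat.mul_comm _ _
    _ = n.descFactorial j := (Nat.descFactorial_eq_factorial_mul_choose n j).symm
    _ ≤ n ^ j := Nat.descFactorial_le_pow n j
    _ ≤ K ^ j := Nat.pow_le_pow_left h j
  exact_mod_cast h1

lemma Ff_mono (a b : ℕ) (ha : 1 ≤ a) (hb : 1 ≤ b) : Ff (a+1) b ≤ Ff a b := by
  have haR : (0:ℝ) < a := by exact_mod_cast ha
  have hbR : (0:ℝ) < b := by exact_mod_cast hb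
  set N : ℝ := (a:ℝ) + (b:ℝ) with hN
  have hNpos : 0 < N := by positivity
  have hN1 : (0:ℝ) < N + 1 := by linarith
  -- choose identity
  have hch : (((a+1+b).choose (a+1) : ℕ) : ℝ) * ((a:ℝ)+1) = (N+1) * (((a+b).choose a : ℕ):ℝ) := by
    have := Nat.add_one_mul_choose_eq (a+b) a
    have h2 : (a+b+1) * ((a+b).choose a) = (a+b+1).choose (a+1) * (a+1) := by
      simpa [Nat.succ_eq_add_one] using this
    have h3 : a+1+b = a+b+1 := by omega
    rw [h3]
    have := congrArg (fun x : ℕ => (x : ℝ)) h2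
    push_cast at this
    rw [hN]; push_cast; linarith [this]
  -- key inequality
  have key : (((a:ℝ)+1)/(N+1))^a * ((b:ℝ)/(N+1))^b ≤ ((a:ℝ)/N)^a * ((b:ℝ)/N)^b := by
    have e1 : ((a:ℝ)+1)/(N+1) = (1 + 1/(a:ℝ)) * ((a:ℝ)/(N+1)) := by
      field_simp
    have lA : (1 + 1/(a:ℝ))^a ≤ (1 + 1/(N:ℝ))^(a+b) := by
      have := lemA 1 (by norm_num) (m := a) (n := a+b) ha (by omega)
      have hc : ((a+b:ℕ):ℝ) = N := by rw [hN]; push_cast; ring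
      rwa [hc] at this
    have e2 : (1 + 1/N) = (N+1)/N := by field_simp
    calc (((a:ℝ)+1)/(N+1))^a * ((b:ℝ)/(N+1))^b
        = (1 + 1/(a:ℝ))^a * (((a:ℝ)/(N+1))^a * ((b:ℝ)/(N+1))^b) := by
          rw [e1, mul_pow]; ring
      _ ≤ (1 + 1/N)^(a+b) * (((a:ℝ)/(N+1))^a * ((b:ℝ)/(N+1))^b) := by
          apply mul_le_mul_of_nonneg_right lA (by positivity)
      _ = ((N+1)/N * ((a:ℝ)/(N+1)))^a * ((N+1)/N * ((b:ℝ)/(N+1)))^b := by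
          rw [e2, pow_add, mul_pow, mul_pow]; ring
      _ = ((a:ℝ)/N)^a * ((b:ℝ)/N)^b := by
          have : (N+1)/N * ((a:ℝ)/(N+1)) = (a:ℝ)/N := by field_simp
          have h2 : (N+1)/N * ((b:ℝ)/(N+1)) = (b:ℝ)/N := by field_simp
          rw [this, h2]
  -- assemble
  have hcast1 : ((a+1:ℕ):ℝ) = (a:ℝ)+1 := by push_cast; ring
  have hcast2 : ((a:ℝ)+1) + (b:ℝ) = N + 1 := by rw [hN]; ring
  have expand : Ff (a+1) b
      = (((a+1+b).choose (a+1) : ℕ) : ℝ) * (((a:ℝ)+1)/(N+1))^(a+1) * ((b:ℝ)/(N+1))^b := by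
    rw [Ff, hcast1, hcast2]
  rw [expand, Ff]
  have hC : (0:ℝ) ≤ (((a+b).choose a : ℕ):ℝ) := by positivity
  have step : (((a+1+b).choose (a+1) : ℕ) : ℝ) * (((a:ℝ)+1)/(N+1))^(a+1)
      = (N+1) * (((a+b).choose a : ℕ):ℝ) / ((a:ℝ)+1) * ((((a:ℝ)+1)/(N+1)) * (((a:ℝ)+1)/(N+1))^a) := by
    rw [← hch, pow_succ]
    field_simp
  rw [step]
  have e3 : (N+1) * (((a+b).choose a : ℕ):ℝ) / ((a:ℝ)+1) * ((((a:ℝ)+1)/(N+1)) * (((a:ℝ)+1)/(N+1))^a)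
      = (((a+b).choose a : ℕ):ℝ) * (((a:ℝ)+1)/(N+1))^a := by
    field_simp
  rw [e3, mul_assoc, mul_assoc]
  apply mul_le_mul_of_nonneg_left _ hC
  rw [← hN]
  exact key

lemma Ff_tele (a b : ℕ) (ha : 2 ≤ a) (hb : 1 ≤ b) : Ff a b ≤ Ff 2 b := by
  induction a, ha using Nat.le_induction with
  | base => exact le_refl _
  | succ n hn ih => exact le_trans (Ff_mono n b (by omega) hb) ih

lemma agm_bound (a b : ℕ) (ha : 0 < a) (hb : 0 < b) (p q : ℝ) (hp : 0 ≤ p) (hq : 0 ≤ q)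
    (hpq : p + q = 1) : p^a * q^b ≤ ((a:ℝ)/((a:ℝ)+(b:ℝ)))^a * ((b:ℝ)/((a:ℝ)+(b:ℝ)))^b := by
  have haR : (0:ℝ) < a := by exact_mod_cast ha
  have hbR : (0:ℝ) < b := by exact_mod_cast hb
  set N : ℝ := (a:ℝ) + (b:ℝ) with hN
  have hNpos : 0 < N := by positivity
  set z₁ : ℝ := p * N / a with hz1
  set z₂ : ℝ := q * N / b with hz2
  have hz1n : 0 ≤ z₁ := by positivity
  have hz2n : 0 ≤ z₂ := by positivity
  have hw : (a:ℝ)/N + (b:ℝ)/N = 1 := by field_simp; exact hN.symm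
  have geo : z₁ ^ ((a:ℝ)/N) * z₂ ^ ((b:ℝ)/N) ≤ 1 := by
    have := Real.geom_mean_le_arith_mean2_weighted
      (by positivity) (by positivity) hz1n hz2n hw
    have e1 : (a:ℝ)/N * z₁ = p := by rw [hz1]; field_simp
    have e2 : (b:ℝ)/N * z₂ = q := by rw [hz2]; field_simp
    rw [e1, e2, hpq] at this
    exact this
  have geopow : z₁ ^ a * z₂ ^ b ≤ 1 := by
    have hpow : (z₁ ^ ((a:ℝ)/N) * z₂ ^ ((b:ℝ)/N)) ^ (a+b : ℕ) ≤ 1 := by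
      calc (z₁ ^ ((a:ℝ)/N) * z₂ ^ ((b:ℝ)/N)) ^ (a+b:ℕ) ≤ 1 ^ (a+b:ℕ) := by
            apply pow_le_pow_left₀ (by positivity) geo
        _ = 1 := one_pow _
    have hNab : ((a+b:ℕ):ℝ) = N := by rw [hN]; push_cast; ring
    have e : (z₁ ^ ((a:ℝ)/N) * z₂ ^ ((b:ℝ)/N)) ^ (a+b:ℕ) = z₁ ^ a * z₂ ^ b := by
      rw [mul_pow, ← Real.rpow_natCast (z₁ ^ ((a:ℝ)/N)) (a+b), ← Real.rpow_natCast (z₂ ^ ((b:ℝ)/N)) (a+b),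
        ← Real.rpow_mul hz1n, ← Real.rpow_mul hz2n, hNab]
      have e1 : (a:ℝ)/N * N = (a:ℝ) := by field_simp
      have e2 : (b:ℝ)/N * N = (b:ℝ) := by field_simp
      rw [e1, e2, Real.rpow_natCast, Real.rpow_natCast]
    rwa [e] at hpow
  have final : p ^ a * q ^ b = ((a:ℝ)/N)^a * ((b:ℝ)/N)^b * (z₁ ^ a * z₂ ^ b) := by
    rw [hz1, hz2, div_pow, div_pow, div_pow, div_pow, mul_pow, mul_pow]
    field_simp
  rw [final]
  calc ((a:ℝ)/N)^a * ((b:ℝ)/N)^b * (z₁ ^ a * z₂ ^ b) ≤ ((a:ℝ)/N)^a * ((b:ℝ)/N)^b * 1 := by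
        apply mul_le_mul_of_nonneg_left geopow (by positivity)
    _ = ((a:ℝ)/N)^a * ((b:ℝ)/N)^b := by ring

lemma ratio_pow_anti (m b : ℕ) (hm : 0 < m) (hmb : m ≤ b) :
    ((b:ℝ)/((b:ℝ)+2))^b ≤ ((m:ℝ)/((m:ℝ)+2))^m := by
  have hmR : (0:ℝ) < m := by exact_mod_cast hm
  have hbR : (0:ℝ) < b := by exact_mod_cast (lt_of_lt_of_le hm hmb)
  have iden : ∀ X : ℝ, 0 < X → X/(X+2) = (1+2/X)⁻¹ := by
    intro X hX
    rw [inv_eq_one_div, div_eq_div_iff (by positivity) (by positivity)]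
    field_simp
  have h := lemA 2 (by norm_num) hm hmb
  rw [iden _ hbR, iden _ hmR, inv_pow, inv_pow]
  exact inv_anti₀ (by positivity) (by exact_mod_cast h)

lemma qbound (k b c t : ℕ) (hc : 0 < c) (ht : 0 < t) (htb : t ≤ b)
    (hden : 2*(b:ℝ)+1+(c:ℝ) = 2*(k:ℝ)) :
    ((2*(b:ℝ)+1)/(2*(k:ℝ)))^b ≤ ((2*(t:ℝ)+1)/(2*(t:ℝ)+1+(c:ℝ)))^t := by
  have h := hbnd c b t hc ht htb
  rwa [hden] at h

set_option maxHeartbeats 2000000 in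
lemma main_pointwise (k a b : ℕ) (hk : 20 ≤ k) (hab : a ≤ b) (hs : a + b = k - 1) :
    (((k - 1).choose a : ℕ) : ℝ) * ((2 * (a : ℝ) + 1) / (2 * (k : ℝ))) ^ a *
        ((2 * (b : ℝ) + 1) / (2 * (k : ℝ))) ^ b *
        (1 + (a : ℝ) * (2 * (b : ℝ) + 1) / ((2 * (a : ℝ) + 1) * ((b : ℝ) + 1))) <
      1 - (1 - 1 / (k : ℝ)) ^ (k - 1) := by
  have hkR : (20:ℝ) ≤ (k:ℝ) := by exact_mod_cast hk
  have hkpos : (0:ℝ) < k := by linarith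
  have hsR : (a:ℝ) + (b:ℝ) = (k:ℝ) - 1 := by
    have : ((a+b:ℕ):ℝ) = ((k-1:ℕ):ℝ) := by exact_mod_cast congrArg (Nat.cast (R := ℝ)) hs
    push_cast [Nat.cast_sub (by omega : 1 ≤ k)] at this
    linarith
  have hb10 : 10 ≤ b := by omega
  have hbR : (0:ℝ) < b := by
    have h10 : (10:ℝ) ≤ b := by exact_mod_cast hb10
    linarith
  have hRb := Rbnd k hk
  have hQnn : (0:ℝ) ≤ (2 * (b : ℝ) + 1) / (2 * (k : ℝ)) := by positivity
  have hFnn : (0:ℝ) ≤ 1 + (a : ℝ) * (2 * (b : ℝ) + 1) / ((2 * (a : ℝ) + 1) * ((b : ℝ) + 1)) := by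
    positivity
  suffices h : (((k - 1).choose a : ℕ) : ℝ) * ((2 * (a : ℝ) + 1) / (2 * (k : ℝ))) ^ a *
        ((2 * (b : ℝ) + 1) / (2 * (k : ℝ))) ^ b *
        (1 + (a : ℝ) * (2 * (b : ℝ) + 1) / ((2 * (a : ℝ) + 1) * ((b : ℝ) + 1))) <
      1 - (19/20:ℝ)^19 by linarith
  obtain (rfl | rfl | rfl | rfl | ha4) : a = 0 ∨ a = 1 ∨ a = 2 ∨ a = 3 ∨ 4 ≤ a := by omega
  · -- a = 0
    have hq : ((2*(b:ℝ)+1)/(2*(b:ℝ)+1+((1:ℕ):ℝ)))^b ≤ ((2*(19:ℝ)+1)/(2*(19:ℝ)+1+((1:ℕ):ℝ)))^19 := by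
      have := hbnd 1 b 19 (by norm_num) (by norm_num) (by omega)
      push_cast at this ⊢
      convert this using 4 <;> norm_num
    have hden : 2*(b:ℝ)+1+((1:ℕ):ℝ) = 2*(k:ℝ) := by
      push_cast at hsR ⊢
      linarith
    rw [hden] at hq
    have hq' : ((2*(b:ℝ)+1)/(2*(k:ℝ)))^b ≤ (39/40:ℝ)^19 := by
      convert hq using 2; norm_num
    simp only [Nat.choose_zero_right, Nat.cast_zero, Nat.cast_one, pow_zero, zero_mul, zero_div,
      add_zero, mul_one, one_mul]
    calc ((2*(b:ℝ)+1)/(2*(k:ℝ)))^b ≤ (39/40:ℝ)^19 := hq'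
      _ < 1 - (19/20:ℝ)^19 := by norm_num
  · -- a = 1
    have hq := qbound k b 3 18 (by norm_num) (by norm_num) (by omega)
      (by push_cast at hsR ⊢; linarith)
    have hq' : ((2*(b:ℝ)+1)/(2*(k:ℝ)))^b ≤ (37/40:ℝ)^18 := by
      convert hq using 2; norm_num
    have hC := choose_le_pow_div (k-1) k 1 (by omega)
    have hCP : (((k-1).choose 1 : ℕ):ℝ) * ((2*((1:ℕ):ℝ)+1)/(2*(k:ℝ)))^1 ≤ 3/2 := by
      calc (((k-1).choose 1 : ℕ):ℝ) * ((2*((1:ℕ):ℝ)+1)/(2*(k:ℝ)))^1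
          ≤ ((k:ℝ)^1/(Nat.factorial 1 : ℝ)) * ((2*((1:ℕ):ℝ)+1)/(2*(k:ℝ)))^1 := by
            apply mul_le_mul_of_nonneg_right hC (by positivity)
        _ = 3/2 := by
            push_cast
            field_simp
            ring
    have hF : 1 + ((1:ℕ):ℝ) * (2*(b:ℝ)+1) / ((2*((1:ℕ):ℝ)+1)*((b:ℝ)+1)) ≤ 5/3 := by
      push_cast
      have h1 : (1:ℝ)*(2*(b:ℝ)+1)/((2*1+1)*((b:ℝ)+1)) ≤ 2/3 := by
        rw [div_le_div_iff₀ (by positivity) (by norm_num)]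
        nlinarith
      linarith
    calc (((k-1).choose 1 : ℕ):ℝ) * ((2*((1:ℕ):ℝ)+1)/(2*(k:ℝ)))^1 * ((2*(b:ℝ)+1)/(2*(k:ℝ)))^b *
          (1 + ((1:ℕ):ℝ) * (2*(b:ℝ)+1) / ((2*((1:ℕ):ℝ)+1)*((b:ℝ)+1)))
        ≤ ((3/2) * (37/40:ℝ)^18) * (5/3) := by
          apply mul_le_mul _ hF hFnn (by positivity)
          apply mul_le_mul hCP hq' (by positivity) (by norm_num)
      _ < 1 - (19/20:ℝ)^19 := by norm_num
  · -- a = 2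
    have hq := qbound k b 5 17 (by norm_num) (by norm_num) (by omega)
      (by push_cast at hsR ⊢; linarith)
    have hq' : ((2*(b:ℝ)+1)/(2*(k:ℝ)))^b ≤ (35/40:ℝ)^17 := by
      convert hq using 2; norm_num
    have hC := choose_le_pow_div (k-1) k 2 (by omega)
    have hCP : (((k-1).choose 2 : ℕ):ℝ) * ((2*((2:ℕ):ℝ)+1)/(2*(k:ℝ)))^2 ≤ 25/8 := by
      calc (((k-1).choose 2 : ℕ):ℝ) * ((2*((2:ℕ):ℝ)+1)/(2*(k:ℝ)))^2
          ≤ ((k:ℝ)^2/(Nat.factorial 2 : ℝ)) * ((2*((2:ℕ):ℝ)+1)/(2*(k:ℝ)))^2 := by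
            apply mul_le_mul_of_nonneg_right hC (by positivity)
        _ = 25/8 := by
            push_cast
            field_simp
            ring
    have hF : 1 + ((2:ℕ):ℝ) * (2*(b:ℝ)+1) / ((2*((2:ℕ):ℝ)+1)*((b:ℝ)+1)) ≤ 9/5 := by
      push_cast
      have h1 : (2:ℝ)*(2*(b:ℝ)+1)/((2*2+1)*((b:ℝ)+1)) ≤ 4/5 := by
        rw [div_le_div_iff₀ (by positivity) (by norm_num)]
        nlinarith
      linarith
    calc (((k-1).choose 2 : ℕ):ℝ) * ((2*((2:ℕ):ℝ)+1)/(2*(k:ℝ)))^2 * ((2*(b:ℝ)+1)/(2*(k:ℝ)))^b *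
          (1 + ((2:ℕ):ℝ) * (2*(b:ℝ)+1) / ((2*((2:ℕ):ℝ)+1)*((b:ℝ)+1)))
        ≤ ((25/8) * (35/40:ℝ)^17) * (9/5) := by
          apply mul_le_mul _ hF hFnn (by positivity)
          apply mul_le_mul hCP hq' (by positivity) (by norm_num)
      _ < 1 - (19/20:ℝ)^19 := by norm_num
  · -- a = 3
    have hq := qbound k b 7 16 (by norm_num) (by norm_num) (by omega)
      (by push_cast at hsR ⊢; linarith)
    have hq' : ((2*(b:ℝ)+1)/(2*(k:ℝ)))^b ≤ (33/40:ℝ)^16 := by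
      convert hq using 2; norm_num
    have hC := choose_le_pow_div (k-1) k 3 (by omega)
    have hCP : (((k-1).choose 3 : ℕ):ℝ) * ((2*((3:ℕ):ℝ)+1)/(2*(k:ℝ)))^3 ≤ 343/48 := by
      calc (((k-1).choose 3 : ℕ):ℝ) * ((2*((3:ℕ):ℝ)+1)/(2*(k:ℝ)))^3
          ≤ ((k:ℝ)^3/(Nat.factorial 3 : ℝ)) * ((2*((3:ℕ):ℝ)+1)/(2*(k:ℝ)))^3 := by
            apply mul_le_mul_of_nonneg_right hC (by positivity)
        _ = 343/48 := by
            push_cast [Nat.factorial]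
            field_simp
            ring
    have hF : 1 + ((3:ℕ):ℝ) * (2*(b:ℝ)+1) / ((2*((3:ℕ):ℝ)+1)*((b:ℝ)+1)) ≤ 13/7 := by
      push_cast
      have h1 : (3:ℝ)*(2*(b:ℝ)+1)/((2*3+1)*((b:ℝ)+1)) ≤ 6/7 := by
        rw [div_le_div_iff₀ (by positivity) (by norm_num)]
        nlinarith
      linarith
    calc (((k-1).choose 3 : ℕ):ℝ) * ((2*((3:ℕ):ℝ)+1)/(2*(k:ℝ)))^3 * ((2*(b:ℝ)+1)/(2*(k:ℝ)))^b *
          (1 + ((3:ℕ):ℝ) * (2*(b:ℝ)+1) / ((2*((3:ℕ):ℝ)+1)*((b:ℝ)+1)))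
        ≤ ((343/48) * (33/40:ℝ)^16) * (13/7) := by
          apply mul_le_mul _ hF hFnn (by positivity)
          apply mul_le_mul hCP hq' (by positivity) (by norm_num)
      _ < 1 - (19/20:ℝ)^19 := by norm_num
  · -- a ≥ 4
    have haR : (0:ℝ) < a := by
      have : (4:ℝ) ≤ a := by exact_mod_cast ha4
      linarith
    set p : ℝ := (2*(a:ℝ)+1)/(2*(k:ℝ)) with hpdef
    set q : ℝ := (2*(b:ℝ)+1)/(2*(k:ℝ)) with hqdef
    have hp0 : 0 ≤ p := by positivity
    have hq0 : 0 ≤ q := by positivity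
    have hpq : p + q = 1 := by
      rw [hpdef, hqdef, ← add_div]
      rw [div_eq_one_iff_eq (by positivity)]
      linarith
    have hchoose : (k-1).choose a = (a+b).choose a := by rw [hs]
    have hagm := agm_bound a b (by omega) (by omega) p q hp0 hq0 hpq
    have hT : (((k-1).choose a : ℕ):ℝ) * p^a * q^b ≤ Ff a b := by
      rw [hchoose, Ff, mul_assoc, mul_assoc]
      apply mul_le_mul_of_nonneg_left _ (by positivity)
      exact hagm
    have hT2 : Ff a b ≤ Ff 2 b := Ff_tele a b (by omega) (by omega)
    -- compute Ff 2 b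
    have hc2 : ((2+b).choose 2) * 2 = (2+b)*(1+b) := by
      have h1 := Nat.descFactorial_eq_factorial_mul_choose (2+b) 2
      have h2 : (2+b).descFactorial 2 = (2+b)*(1+b) := by
        rw [Nat.descFactorial_eq_prod_range]
        rw [Finset.prod_range_succ, Finset.prod_range_succ, Finset.prod_range_zero]
        have e2 : 2+b-1 = 1+b := by omega
        rw [e2]
        simp only [Nat.sub_zero]
        ring
      rw [h2] at h1
      have : Nat.factorial 2 = 2 := rfl
      rw [this] at h1
      omega
    have hc2R : (((2+b).choose 2 : ℕ):ℝ) = ((b:ℝ)+2)*((b:ℝ)+1)/2 := by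
      have h3 := congrArg (fun x : ℕ => (x:ℝ)) hc2
      push_cast at h3
      linarith
    have hFf2 : Ff 2 b = (2*((b:ℝ)+1)/((b:ℝ)+2)) * ((b:ℝ)/((b:ℝ)+2))^b := by
      have hb2 : ((b:ℝ)+2) ≠ 0 := by linarith
      have e0 : ((2:ℕ):ℝ) + (b:ℝ) = (b:ℝ)+2 := by push_cast; ring
      rw [Ff, hc2R, e0]
      congr 1
      push_cast
      field_simp
    have hF2 : 1 + (a : ℝ) * (2 * (b : ℝ) + 1) / ((2 * (a : ℝ) + 1) * ((b : ℝ) + 1)) ≤ 2 := by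
      have h1 : (a : ℝ) * (2 * (b : ℝ) + 1) / ((2 * (a : ℝ) + 1) * ((b : ℝ) + 1)) ≤ 1 := by
        rw [div_le_one (by positivity)]
        nlinarith
      linarith
    have hT' : (((k-1).choose a : ℕ):ℝ) * p^a * q^b ≤ Ff 2 b := le_trans hT hT2
    have hFf2nn : (0:ℝ) ≤ Ff 2 b := by
      rw [Ff]; positivity
    have hmain : (((k-1).choose a : ℕ):ℝ) * p^a * q^b *
        (1 + (a : ℝ) * (2 * (b : ℝ) + 1) / ((2 * (a : ℝ) + 1) * ((b : ℝ) + 1))) ≤ Ff 2 b * 2 := by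
      apply mul_le_mul hT' hF2 hFnn hFf2nn
    rcases le_or_gt b 13 with hble | hbge
    · -- 10 ≤ b ≤ 13
      have hble' : (b:ℝ) ≤ 13 := by exact_mod_cast hble
      have hcoef : 2*((b:ℝ)+1)/((b:ℝ)+2) ≤ 28/15 := by
        rw [div_le_div_iff₀ (by linarith) (by norm_num)]
        linarith
      have hpow := ratio_pow_anti 10 b (by norm_num) hb10
      have hpow' : ((b:ℝ)/((b:ℝ)+2))^b ≤ (5/6:ℝ)^10 := by
        convert hpow using 2 <;> norm_num
      have : Ff 2 b ≤ (28/15) * (5/6:ℝ)^10 := by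
        rw [hFf2]
        apply mul_le_mul hcoef hpow' (by positivity) (by norm_num)
      calc (((k-1).choose a : ℕ):ℝ) * p^a * q^b *
          (1 + (a : ℝ) * (2 * (b : ℝ) + 1) / ((2 * (a : ℝ) + 1) * ((b : ℝ) + 1)))
          ≤ Ff 2 b * 2 := hmain
        _ ≤ ((28/15) * (5/6:ℝ)^10) * 2 := by
            apply mul_le_mul_of_nonneg_right this (by norm_num)
        _ < 1 - (19/20:ℝ)^19 := by norm_num
    · -- b ≥ 14
      have hb14 : 14 ≤ b := by omega
      have hcoef : 2*((b:ℝ)+1)/((b:ℝ)+2) ≤ 2 := by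
        rw [div_le_iff₀ (by linarith)]
        linarith
      have hpow := ratio_pow_anti 14 b (by norm_num) hb14
      have hpow' : ((b:ℝ)/((b:ℝ)+2))^b ≤ (7/8:ℝ)^14 := by
        convert hpow using 2 <;> norm_num
      have : Ff 2 b ≤ 2 * (7/8:ℝ)^14 := by
        rw [hFf2]
        apply mul_le_mul hcoef hpow' (by positivity) (by norm_num)
      calc (((k-1).choose a : ℕ):ℝ) * p^a * q^b *
          (1 + (a : ℝ) * (2 * (b : ℝ) + 1) / ((2 * (a : ℝ) + 1) * ((b : ℝ) + 1)))
          ≤ Ff 2 b * 2 := hmain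
        _ ≤ (2 * (7/8:ℝ)^14) * 2 := by
            apply mul_le_mul_of_nonneg_right this (by norm_num)
        _ < 1 - (19/20:ℝ)^19 := by norm_num

lemma prod2 (f : ℕ → ℝ) : ∏ i ∈ Finset.range 2, f i = f 0 * f 1 := by
  rw [Finset.prod_range_succ, Finset.prod_range_one]

lemma sum12 (f : ℕ → ℝ) : ∑ i ∈ Finset.Ico 1 2, f i = f 1 := by
  rw [Finset.sum_Ico_succ_top (by norm_num), Finset.Ico_self, Finset.sum_empty, zero_add]

lemma gfun_ext (k : ℕ) (a a' : ℕ → ℕ) (h0 : a 0 = a' 0) (h1 : a 1 = a' 1) :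
    gfun k 2 a = gfun k 2 a' := by
  rw [gfun, gfun]
  simp only [prod2, sum12, h0, h1]

lemma gfun_eq (k : ℕ) (hk : 20 ≤ k) (a : ℕ → ℕ) (hv : IsVec k 2 a) :
    gfun k 2 a = (((k - 1).choose (a 0) : ℕ) : ℝ) *
        ((2 * ((a 0) : ℝ) + 1) / (2 * (k : ℝ))) ^ (a 0) *
        ((2 * ((a 1) : ℝ) + 1) / (2 * (k : ℝ))) ^ (a 1) *
        (1 + ((a 0) : ℝ) * (2 * ((a 1) : ℝ) + 1) / ((2 * ((a 0) : ℝ) + 1) * (((a 1) : ℝ) + 1))) := by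
  obtain ⟨hm, hs⟩ := hv
  have hs' : a 0 + a 1 = k - 1 := by
    rw [Finset.sum_range_succ, Finset.sum_range_one] at hs
    exact hs
  have hch : (k-1).choose (a 0) * (a 0).factorial * (a 1).factorial = (k-1).factorial := by
    have h := Nat.choose_mul_factorial_mul_factorial (show a 0 ≤ k-1 by omega)
    rwa [show k-1-(a 0) = a 1 by omega] at h
  have hfact : ((k-1).factorial : ℝ) / (((a 0).factorial : ℝ) * ((a 1).factorial : ℝ))
      = (((k-1).choose (a 0) : ℕ) : ℝ) := by
    have h2 := congrArg (fun x : ℕ => (x:ℝ)) hch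
    push_cast at h2
    rw [div_eq_iff (by positivity)]
    linear_combination h2.symm
  have hFeq : (1 + ((a 0 : ℝ) / ((2 * a 0 + 1 : ℕ) : ℝ)) * (((2 * a 1 + 1 : ℕ):ℝ) / ((a 1 + 1 : ℕ):ℝ)))
      = (1 + ((a 0) : ℝ) * (2 * ((a 1) : ℝ) + 1) / ((2 * ((a 0) : ℝ) + 1) * (((a 1) : ℝ) + 1))) := by
    push_cast
    rw [div_mul_div_comm]
  rw [gfun]
  simp only [prod2, sum12]
  rw [hfact, hFeq]
  push_cast
  ring


theorem g2_lt_f0 (k : ℕ) (hk : 20 ≤ k) :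
    gThr k 2 < 1 - (1 - 1 / (k : ℝ)) ^ (k - 1) ∧
    ∀ a b : ℕ, a ≤ b → a + b = k - 1 →
      (((k - 1).choose a : ℕ) : ℝ) * ((2 * (a : ℝ) + 1) / (2 * (k : ℝ))) ^ a *
          ((2 * (b : ℝ) + 1) / (2 * (k : ℝ))) ^ b *
          (1 + (a : ℝ) * (2 * (b : ℝ) + 1) / ((2 * (a : ℝ) + 1) * ((b : ℝ) + 1))) <
        1 - (1 - 1 / (k : ℝ)) ^ (k - 1) := by
  have hpt : ∀ a b : ℕ, a ≤ b → a + b = k - 1 →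
      (((k - 1).choose a : ℕ) : ℝ) * ((2 * (a : ℝ) + 1) / (2 * (k : ℝ))) ^ a *
          ((2 * (b : ℝ) + 1) / (2 * (k : ℝ))) ^ b *
          (1 + (a : ℝ) * (2 * (b : ℝ) + 1) / ((2 * (a : ℝ) + 1) * ((b : ℝ) + 1))) <
        1 - (1 - 1 / (k : ℝ)) ^ (k - 1) :=
    fun a b hab hs => main_pointwise k a b hk hab hs
  refine ⟨?_, hpt⟩
  set S := {x : ℝ | ∃ a : ℕ → ℕ, IsVec k 2 a ∧ x = gfun k 2 a} with hS
  have hne : S.Nonempty := by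
    refine ⟨gfun k 2 (fun i => if i = 0 then 0 else k-1), ⟨_, ⟨?_, ?_⟩, rfl⟩⟩
    · intro i j hij hj2
      interval_cases j <;> interval_cases i <;> simp
    · simp [Finset.sum_range_succ]
  have hfin : S.Finite := by
    apply Set.Finite.subset (Set.Finite.image
      (f := fun pr : ℕ × ℕ => gfun k 2 (fun i => if i = 0 then pr.1 else pr.2))
      ((Set.finite_Iic (k-1)).prod (Set.finite_Iic (k-1))))
    rintro x ⟨a, ⟨hm, hs⟩, rfl⟩
    have hs' : a 0 + a 1 = k - 1 := by
      rw [Finset.sum_range_succ, Finset.sum_range_one] at hs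
      exact hs
    refine ⟨(a 0, a 1), ⟨?_, ?_⟩, ?_⟩
    · simp only [Set.mem_Iic]; omega
    · simp only [Set.mem_Iic]; omega
    · exact (gfun_ext k a _ rfl rfl).symm
  have hmem := hne.csSup_mem hfin
  rw [gThr]
  rw [← hS]
  obtain ⟨a, hvec, hx⟩ := hmem
  rw [hx, gfun_eq k hk a hvec]
  have h01 : a 0 ≤ a 1 := hvec.1 0 1 (by norm_num) (by norm_num)
  have hs' : a 0 + a 1 = k - 1 := by
    have hs := hvec.2
    rw [Finset.sum_range_succ, Finset.sum_range_one] at hs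
    exact hs
  exact hpt (a 0) (a 1) h01 hs'
end

section
/- For all integers r ≥ 3 and k ≥ 10 it holds that g_r(k) < 1 − (1 − 1/k)^{k−1}; in fact, for every a = (a_1,…,a_r) ∈ ℕ^r_{k−1}, g_r(a) < 1 − 1.06·e^{−1} ≤ 1 − (1 − 1/k)^{k−1}. -/
open Finset

section AuxGr
open Real

lemma stirling_ge (n : ℕ) : Real.sqrt Real.pi ≤ Stirling.stirlingSeq (n+1) :=
  Stirling.stirlingSeq'_antitone.le_of_tendsto
    (Stirling.tendsto_stirlingSeq_sqrt_pi.comp (Filter.tendsto_add_atTop_nat 1)) n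

lemma stirling_le (n : ℕ) : Stirling.stirlingSeq (n+1) ≤ Real.exp 1 / Real.sqrt 2 := by
  have := Stirling.stirlingSeq'_antitone (Nat.zero_le n)
  simpa [Stirling.stirlingSeq_one] using this

lemma fact_eq (n : ℕ) : (Nat.factorial (n+1) : ℝ)
    = Stirling.stirlingSeq (n+1) * (Real.sqrt (2*(n+1)) * (((n+1):ℕ) / Real.exp 1)^(n+1)) := by
  have : Stirling.stirlingSeq (n+1) = (Nat.factorial (n+1) : ℝ) / (Real.sqrt (2*(n+1)) * (((n+1):ℕ) / Real.exp 1)^(n+1)) := by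
    rw [Stirling.stirlingSeq]; norm_cast
  rw [this, div_mul_cancel₀]
  positivity

lemma fact_lower (n : ℕ) (hn : 1 ≤ n) :
    2.5 * Real.sqrt n * ((n:ℝ) / Real.exp 1) ^ n ≤ (Nat.factorial n : ℝ) := by
  obtain ⟨m, rfl⟩ := Nat.exists_eq_add_of_le hn
  rw [Nat.add_comm 1 m, fact_eq m]
  have h := stirling_ge m
  have h2 : Real.sqrt (2*((m:ℝ)+1)) = Real.sqrt 2 * Real.sqrt ((m:ℝ)+1) := Real.sqrt_mul (by norm_num) _
  have hpi : (2.5:ℝ) ≤ Real.sqrt Real.pi * Real.sqrt 2 := by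
    rw [← Real.sqrt_mul Real.pi_pos.le]
    rw [show (2.5:ℝ) = Real.sqrt (2.5^2) by rw [Real.sqrt_sq]; norm_num]
    apply Real.sqrt_le_sqrt
    nlinarith [Real.pi_gt_d6]
  have hx : (0:ℝ) ≤ Real.sqrt ((m:ℝ)+1) * (((m+1):ℝ) / Real.exp 1)^(m+1) := by positivity
  push_cast
  push_cast at h2
  calc 2.5 * Real.sqrt ((m:ℝ)+1) * (((m:ℝ)+1) / Real.exp 1) ^ (m+1)
      ≤ (Real.sqrt Real.pi * Real.sqrt 2) * (Real.sqrt ((m:ℝ)+1) * (((m:ℝ)+1) / Real.exp 1)^(m+1)) := by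
        rw [mul_assoc]; exact mul_le_mul_of_nonneg_right hpi hx
    _ ≤ Stirling.stirlingSeq (m+1) * (Real.sqrt (2*((m:ℝ)+1)) * (((m:ℝ)+1) / Real.exp 1)^(m+1)) := by
        rw [h2]
        have : (0:ℝ) ≤ Real.sqrt 2 * (Real.sqrt ((m:ℝ)+1) * (((m:ℝ)+1) / Real.exp 1)^(m+1)) := by positivity
        calc Real.sqrt Real.pi * Real.sqrt 2 * (Real.sqrt ((m:ℝ)+1) * (((m:ℝ)+1) / Real.exp 1)^(m+1))
            = Real.sqrt Real.pi * (Real.sqrt 2 * (Real.sqrt ((m:ℝ)+1) * (((m:ℝ)+1) / Real.exp 1)^(m+1))) := by ring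
          _ ≤ Stirling.stirlingSeq (m+1) * (Real.sqrt 2 * (Real.sqrt ((m:ℝ)+1) * (((m:ℝ)+1) / Real.exp 1)^(m+1))) :=
              mul_le_mul_of_nonneg_right h this
          _ = Stirling.stirlingSeq (m+1) * (Real.sqrt 2 * Real.sqrt ((m:ℝ)+1) * (((m:ℝ)+1) / Real.exp 1)^(m+1)) := by ring

lemma fact_upper (n : ℕ) (hn : 1 ≤ n) :
    (Nat.factorial n : ℝ) ≤ Real.exp 1 * Real.sqrt n * ((n:ℝ) / Real.exp 1) ^ n := by
  obtain ⟨m, rfl⟩ := Nat.exists_eq_add_of_le hn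
  rw [Nat.add_comm 1 m, fact_eq m]
  ·
    have h := stirling_le m
    have h2 : Real.sqrt (2*((m:ℝ)+1)) = Real.sqrt 2 * Real.sqrt ((m:ℝ)+1) := Real.sqrt_mul (by norm_num) _
    push_cast
    push_cast at h2
    rw [h2]
    have hs2 : (0:ℝ) < Real.sqrt 2 := by positivity
    have hx : (0:ℝ) ≤ Real.sqrt ((m:ℝ)+1) * (((m:ℝ)+1) / Real.exp 1)^(m+1) := by positivity
    calc Stirling.stirlingSeq (m+1) * (Real.sqrt 2 * Real.sqrt ((m:ℝ)+1) * (((m:ℝ)+1) / Real.exp 1)^(m+1))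
        = (Stirling.stirlingSeq (m+1) * Real.sqrt 2) * (Real.sqrt ((m:ℝ)+1) * (((m:ℝ)+1) / Real.exp 1)^(m+1)) := by ring
      _ ≤ Real.exp 1 * (Real.sqrt ((m:ℝ)+1) * (((m:ℝ)+1) / Real.exp 1)^(m+1)) := by
          apply mul_le_mul_of_nonneg_right _ hx
          calc Stirling.stirlingSeq (m+1) * Real.sqrt 2 ≤ (Real.exp 1 / Real.sqrt 2) * Real.sqrt 2 :=
                mul_le_mul_of_nonneg_right h hs2.le
            _ = Real.exp 1 := div_mul_cancel₀ _ (ne_of_gt hs2)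
      _ = Real.exp 1 * Real.sqrt ((m:ℝ)+1) * (((m:ℝ)+1) / Real.exp 1)^(m+1) := by ring


lemma prod_sqrt {ι : Type*} (s : Finset ι) (f : ι → ℝ) (h : ∀ i ∈ s, 0 ≤ f i) :
    ∏ i ∈ s, Real.sqrt (f i) = Real.sqrt (∏ i ∈ s, f i) := by
  classical
  induction s using Finset.induction with
  | empty => simp
  | @insert a s' hxx ih =>
    rw [Finset.prod_insert hxx, Finset.prod_insert hxx, ih (fun i hi => h i (Finset.mem_insert_of_mem hi)),
      Real.sqrt_mul (h a (Finset.mem_insert_self a s'))]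

lemma prod_lower {ι : Type*} (s : Finset ι) (f : ι → ℕ) (h : ∀ i ∈ s, 1 ≤ f i) :
    (∑ i ∈ s, f i) + 1 ≤ (∏ i ∈ s, f i) + s.card := by
  classical
  induction s using Finset.induction with
  | empty => simp
  | @insert a s' hxx ih =>
    have ha := h a (Finset.mem_insert_self a s')
    have ih' := ih (fun i hi => h i (Finset.mem_insert_of_mem hi))
    have hp : 1 ≤ ∏ i ∈ s', f i := Finset.one_le_prod' (fun i hi => h i (Finset.mem_insert_of_mem hi))
    rw [Finset.sum_insert hxx, Finset.prod_insert hxx, Finset.card_insert_of_notMem hxx]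
    have key : f a * ∏ i ∈ s', f i + 1 ≥ f a + ∏ i ∈ s', f i := by nlinarith
    omega

lemma geom_dom (c : ℝ) (hc0 : 0 ≤ c) (hc : c ≤ 2/3) :
    ∀ t : ℕ, 2 ≤ t → (t:ℝ) * c^t ≤ 2 * c^2 := by
  intro t ht
  induction t, ht using Nat.le_induction with
  | base => norm_num
  | succ n hn ih =>
    have h1 : ((n:ℝ)+1) ≤ (3/2) * n := by
      have : (2:ℝ) ≤ n := by exact_mod_cast hn
      linarith
    have hcp : (0:ℝ) ≤ c^n := pow_nonneg hc0 n
    have hcn : (0:ℝ) ≤ (n:ℝ) * c^n := by positivity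
    calc ((n+1:ℕ):ℝ) * c^(n+1) = c * (((n:ℝ)+1) * c^n) := by push_cast; ring
      _ ≤ c * ((3/2) * n * c^n) := by
          apply mul_le_mul_of_nonneg_left _ hc0
          apply mul_le_mul_of_nonneg_right h1 hcp
      _ = (3/2) * c * ((n:ℝ) * c^n) := by ring
      _ ≤ 1 * (2 * c^2) := by
          apply mul_le_mul (by linarith) ih hcn (by norm_num)
      _ = 2 * c^2 := by ring

lemma cube_dom (c : ℝ) (hc0 : 0 ≤ c) (hc : c ≤ 27/64) :
    ∀ t : ℕ, 10 ≤ t → (t:ℝ)^3 * c^t ≤ 1000 * c^10 := by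
  intro t ht
  induction t, ht using Nat.le_induction with
  | base => norm_num
  | succ n hn ih =>
    have hn' : (10:ℝ) ≤ n := by exact_mod_cast hn
    have h1 : ((n:ℝ)+1)^3 ≤ (1331/1000) * (n:ℝ)^3 := by
      nlinarith [sq_nonneg ((n:ℝ)-10), mul_nonneg (sq_nonneg ((n:ℝ)-10)) (by linarith : (0:ℝ) ≤ (n:ℝ))]
    have hcp : (0:ℝ) ≤ c^n := pow_nonneg hc0 n
    have hcn : (0:ℝ) ≤ (n:ℝ)^3 * c^n := by positivity
    calc ((n+1:ℕ):ℝ)^3 * c^(n+1) = c * (((n:ℝ)+1)^3 * c^n) := by push_cast; ring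
      _ ≤ c * ((1331/1000) * (n:ℝ)^3 * c^n) := by
          apply mul_le_mul_of_nonneg_left _ hc0
          apply mul_le_mul_of_nonneg_right h1 hcp
      _ = ((1331/1000) * c) * ((n:ℝ)^3 * c^n) := by ring
      _ ≤ 1 * (1000 * c^10) := by
          apply mul_le_mul (by linarith) ih hcn (by norm_num)
      _ = 1000 * c^10 := by ring


-- numeric exp bounds
lemma exp_third_le : Real.exp (1/3) ≤ 1.396 := by
  have h3 : (Real.exp (1/3))^3 = Real.exp 1 := by
    rw [← Real.exp_nat_mul]; norm_num
  nlinarith [Real.exp_one_lt_d9, Real.exp_pos (1/3:ℝ), sq_nonneg (Real.exp (1/3) - 1.396),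
    sq_nonneg (Real.exp (1/3) + 1.396)]

lemma exp_inv_r_le (r : ℕ) (hr : 3 ≤ r) : Real.exp (1/(r:ℝ)) ≤ 1.396 := by
  have : (1:ℝ)/r ≤ 1/3 := by
    apply div_le_div_of_nonneg_left (by norm_num) (by norm_num)
    exact_mod_cast hr
  exact le_trans (Real.exp_le_exp.2 this) exp_third_le

lemma exp_tenth_le : Real.exp (1/10) ≤ 1.106 := by
  have h3 : (Real.exp (1/10))^10 = Real.exp 1 := by
    rw [← Real.exp_nat_mul]; norm_num
  by_contra h
  push_neg at h
  have : (1.106:ℝ)^10 < (Real.exp (1/10))^10 := by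
    apply pow_lt_pow_left₀ h (by norm_num)
    norm_num
  rw [h3] at this
  nlinarith [Real.exp_one_lt_d9]

lemma exp_neg35_le : Real.exp (-(3/5)) ≤ 0.55 := by
  have h3 : (Real.exp (3/5))^5 = Real.exp 1 ^ 3 := by
    rw [← Real.exp_nat_mul, ← Real.exp_nat_mul]; norm_num
  have he : (20/11:ℝ) < Real.exp (3/5) := by
    by_contra h
    push_neg at h
    have h5 : (Real.exp (3/5))^5 ≤ (20/11:ℝ)^5 := by
      apply pow_le_pow_left₀ (Real.exp_pos _).le h
    rw [h3] at h5
    have hc : (2.7182818283:ℝ)^3 < Real.exp 1 ^ 3 := by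
      apply pow_lt_pow_left₀ Real.exp_one_gt_d9 (by norm_num)
      norm_num
    nlinarith
  rw [Real.exp_neg]
  rw [inv_le_comm₀ (Real.exp_pos _) (by norm_num)]
  linarith

lemma target_gt : (0.585:ℝ) < 1 - 1.06 * Real.exp (-1) := by
  have h : Real.exp (-1) < 0.375 := by
    rw [Real.exp_neg, inv_lt_comm₀ (Real.exp_pos _) (by norm_num)]
    nlinarith [Real.exp_one_gt_d9]
  nlinarith

-- part 3 : (1-1/k)^(k-1) < 1.06 exp(-1)
lemma pow_lt_main (k : ℕ) (hk : 10 ≤ k) :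
    (1 - 1 / (k : ℝ)) ^ (k - 1) < 1.06 * Real.exp (-1) := by
  have hk0 : (0:ℝ) < k := by positivity
  have hbase : (0:ℝ) ≤ 1 - 1/(k:ℝ) := by
    rw [sub_nonneg, div_le_one hk0]; exact_mod_cast Nat.one_le_of_lt hk
  have hexp_lb : (2.7182818286:ℝ)⁻¹ < Real.exp (-1) := by
    rw [Real.exp_neg]
    apply inv_strictAnti₀ (Real.exp_pos _)
    exact Real.exp_one_lt_d9
  rcases le_or_gt 18 k with h18 | h18
  · -- k ≥ 18
    have hcast : ((k-1:ℕ):ℝ) = (k:ℝ) - 1 := by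
      have : 1 ≤ k := by omega
      push_cast [this]; ring
    have h1 : (1 - 1/(k:ℝ)) ≤ Real.exp (-(1/(k:ℝ))) := by
      have := Real.add_one_le_exp (-(1/(k:ℝ)))
      linarith
    calc (1 - 1/(k:ℝ))^(k-1) ≤ (Real.exp (-(1/(k:ℝ))))^(k-1) :=
          pow_le_pow_left₀ hbase h1 _
      _ = Real.exp (((k-1:ℕ):ℝ) * (-(1/(k:ℝ)))) := by rw [← Real.exp_nat_mul]
      _ ≤ Real.exp (-(17/18)) := by
          apply Real.exp_le_exp.2
          rw [hcast]
          have hk18 : (18:ℝ) ≤ (k:ℝ) := by exact_mod_cast h18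
          rw [mul_neg, neg_le_neg_iff, mul_one_div, le_div_iff₀ hk0]
          nlinarith
      _ = Real.exp (-1) * Real.exp (1/18) := by
          rw [← Real.exp_add]; norm_num
      _ < Real.exp (-1) * 1.06 := by
          apply mul_lt_mul_of_pos_left _ (Real.exp_pos _)
          have h3 : (Real.exp (1/18))^18 = Real.exp 1 := by
            rw [← Real.exp_nat_mul]; norm_num
          by_contra hcon
          push_neg at hcon
          have : (1.06:ℝ)^18 ≤ (Real.exp (1/18))^18 :=
            pow_le_pow_left₀ (by norm_num) hcon _
          rw [h3] at this
          nlinarith [Real.exp_one_lt_d9]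
      _ = 1.06 * Real.exp (-1) := by ring
  · -- 10 ≤ k < 18
    have : (1 - 1/(k:ℝ))^(k-1) < 1.06 * 2.7182818286⁻¹ := by
      interval_cases k <;> norm_num
    nlinarith



lemma master (k r : ℕ) (hr : 3 ≤ r) (hk : 10 ≤ k) (a : ℕ → ℕ)
    (hsum : ∑ i ∈ Finset.range r, a i = k - 1) :
    (((k - 1).factorial : ℝ) / (∏ i ∈ Finset.range r, ((a i).factorial : ℝ))) *
      (∏ i ∈ Finset.range r, (((r * a i + 1 : ℕ) : ℝ) / ((r * k : ℕ) : ℝ)) ^ (a i))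
    ≤ 1.106 * 0.5584 ^ ((Finset.range r).filter (fun i => a i ≠ 0)).card *
      Real.sqrt ((((k - 1 : ℕ)) : ℝ) / ∏ i ∈ (Finset.range r).filter (fun i => a i ≠ 0), (a i : ℝ)) := by
  classical
  set m := k - 1 with hmdef
  set T := (Finset.range r).filter (fun i => a i ≠ 0) with hTdef
  set p : ℕ → ℝ := fun i => (((r * a i + 1 : ℕ) : ℝ) / ((r * k : ℕ) : ℝ)) with hpdef
  have hp_eq : ∀ i, p i = ((r:ℝ) * (a i : ℝ) + 1) / ((r:ℝ) * (k:ℝ)) := by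
    intro i; rw [hpdef]; push_cast; ring
  have hm9 : 9 ≤ m := by omega
  have hm1 : 1 ≤ m := by omega
  have hk0 : (0:ℝ) < (k:ℝ) := by positivity
  have hr0 : (0:ℝ) < (r:ℝ) := by positivity
  have hmR : (m:ℝ) = (k:ℝ) - 1 := by
    have : 1 ≤ k := by omega
    rw [hmdef]; push_cast [this]; ring
  have hmem : ∀ i ∈ T, 1 ≤ a i := by
    intro i hi
    rw [hTdef, Finset.mem_filter] at hi
    omega
  have hsumT : ∑ i ∈ T, a i = m := by rw [hTdef, Finset.sum_filter_ne_zero]; exact hsum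
  have hppos : ∀ i, 0 ≤ p i := by
    intro i; rw [hp_eq i]; positivity
  clear_value p
  -- reduce products to T
  have hprodfact : ∏ i ∈ Finset.range r, ((a i).factorial : ℝ) = ∏ i ∈ T, ((a i).factorial : ℝ) := by
    rw [hTdef]
    symm
    apply Finset.prod_filter_of_ne
    intro x hx hne h0
    apply hne
    rw [h0]; norm_num
  have hprodp : ∏ i ∈ Finset.range r, (p i) ^ (a i) = ∏ i ∈ T, (p i) ^ (a i) := by
    rw [hTdef]
    symm
    apply Finset.prod_filter_of_ne
    intro x hx hne h0
    apply hne
    rw [h0, pow_zero]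
  have hfactTpos : (0:ℝ) < ∏ i ∈ T, ((a i).factorial : ℝ) := by
    apply Finset.prod_pos; intro i _; positivity
  -- key per-index bound
  have key : ∀ i ∈ T, ((m:ℝ)/Real.exp 1)^(a i) * ((p i)^(a i) / ((a i).factorial : ℝ))
      ≤ (1 - 1/(k:ℝ))^(a i) * (0.5584 * (Real.sqrt (a i))⁻¹) := by
    intro i hi
    have hb : 1 ≤ a i := hmem i hi
    have hbR : (1:ℝ) ≤ (a i : ℝ) := by exact_mod_cast hb
    have hbR0 : (0:ℝ) < (a i : ℝ) := by linarith
    have hfl := fact_lower (a i) hb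
    have hlow : (0:ℝ) < 2.5 * Real.sqrt (a i) * ((a i:ℝ)/Real.exp 1)^(a i) := by positivity
    have h1 : (p i)^(a i) / (((a i).factorial : ℝ))
        ≤ (p i)^(a i) / (2.5 * Real.sqrt (a i) * ((a i:ℝ)/Real.exp 1)^(a i)) :=
      div_le_div_of_nonneg_left (pow_nonneg (hppos i) _) hlow hfl
    have he : (0:ℝ) < Real.exp 1 := Real.exp_pos 1
    have hsq : (0:ℝ) < Real.sqrt (a i) := Real.sqrt_pos.2 hbR0
    have hbase : ((m:ℝ)/Real.exp 1) * p i / ((a i:ℝ)/Real.exp 1) = (m:ℝ) * p i / (a i:ℝ) := by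
      field_simp
    have h2 : ((m:ℝ)/Real.exp 1)^(a i) * ((p i)^(a i) / (2.5 * Real.sqrt (a i) * ((a i:ℝ)/Real.exp 1)^(a i)))
        = ((m:ℝ) * p i / (a i:ℝ))^(a i) / (2.5 * Real.sqrt (a i)) := by
      rw [← hbase, div_pow (((m:ℝ)/Real.exp 1) * p i), mul_pow]
      have hy : ((a i:ℝ)/Real.exp 1)^(a i) ≠ 0 := by positivity
      field_simp
    have hmp : (m:ℝ) * p i / (a i:ℝ) = (1 - 1/(k:ℝ)) * (1 + 1/((r:ℝ) * (a i:ℝ))) := by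
      rw [hp_eq i, hmR]
      field_simp
      try ring
      try exact Or.inl trivial
    have hfac : (0:ℝ) ≤ 1 - 1/(k:ℝ) := by
      rw [sub_nonneg, div_le_one hk0]
      have : (10:ℝ) ≤ (k:ℝ) := by exact_mod_cast hk
      linarith
    have h3 : ((m:ℝ) * p i / (a i:ℝ))^(a i) ≤ (1 - 1/(k:ℝ))^(a i) * 1.396 := by
      rw [hmp, mul_pow]
      apply mul_le_mul_of_nonneg_left _ (pow_nonneg hfac _)
      have hx : (0:ℝ) < (r:ℝ) * (a i:ℝ) := by positivity
      have h4 : (1:ℝ) + 1/((r:ℝ) * (a i:ℝ)) ≤ Real.exp (1/((r:ℝ) * (a i:ℝ))) := by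
        have := Real.add_one_le_exp (1/((r:ℝ) * (a i:ℝ)))
        linarith
      calc (1 + 1/((r:ℝ) * (a i:ℝ)))^(a i) ≤ (Real.exp (1/((r:ℝ) * (a i:ℝ))))^(a i) := by
            apply pow_le_pow_left₀ (by positivity) h4
        _ = Real.exp ((a i:ℝ) * (1/((r:ℝ) * (a i:ℝ)))) := by rw [← Real.exp_nat_mul]
        _ = Real.exp (1/(r:ℝ)) := by
            congr 1
            field_simp
            try ring
        _ ≤ 1.396 := exp_inv_r_le r hr
    calc ((m:ℝ)/Real.exp 1)^(a i) * ((p i)^(a i) / ((a i).factorial : ℝ))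
        ≤ ((m:ℝ)/Real.exp 1)^(a i) * ((p i)^(a i) / (2.5 * Real.sqrt (a i) * ((a i:ℝ)/Real.exp 1)^(a i))) := by
          apply mul_le_mul_of_nonneg_left h1 (by positivity)
      _ = ((m:ℝ) * p i / (a i:ℝ))^(a i) / (2.5 * Real.sqrt (a i)) := h2
      _ ≤ ((1 - 1/(k:ℝ))^(a i) * 1.396) / (2.5 * Real.sqrt (a i)) := by
          rw [div_eq_mul_inv, div_eq_mul_inv]
          exact mul_le_mul_of_nonneg_right h3 (by positivity)
      _ = (1 - 1/(k:ℝ))^(a i) * (0.5584 * (Real.sqrt (a i))⁻¹) := by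
          have hsq : (0:ℝ) < Real.sqrt (a i) := Real.sqrt_pos.2 hbR0
          field_simp
          ring
  -- multiply per-index bounds over T
  have hLnn : ∀ i ∈ T, (0:ℝ) ≤ ((m:ℝ)/Real.exp 1)^(a i) * ((p i)^(a i) / ((a i).factorial : ℝ)) := by
    intro i _
    apply mul_nonneg (by positivity)
    exact div_nonneg (pow_nonneg (hppos i) _) (by positivity)
  have hprodle := Finset.prod_le_prod hLnn key
  rw [Finset.prod_mul_distrib, Finset.prod_mul_distrib,
    Finset.prod_pow_eq_pow_sum T (fun i => a i) ((m:ℝ)/Real.exp 1),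
    Finset.prod_pow_eq_pow_sum T (fun i => a i) (1 - 1/(k:ℝ)), hsumT] at hprodle
  have hconst : ∏ i ∈ T, ((0.5584:ℝ) * (Real.sqrt (a i))⁻¹)
      = 0.5584 ^ T.card * (Real.sqrt (∏ i ∈ T, (a i:ℝ)))⁻¹ := by
    rw [Finset.prod_mul_distrib, Finset.prod_const, Finset.prod_inv_distrib,
      prod_sqrt T (fun i => (a i : ℝ)) (fun i _ => by positivity)]
  rw [hconst] at hprodle
  -- rewrite goal
  have hFQ : ((m.factorial : ℝ) / (∏ i ∈ Finset.range r, ((a i).factorial : ℝ))) *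
      (∏ i ∈ Finset.range r, (p i) ^ (a i))
      = (m.factorial : ℝ) * ∏ i ∈ T, ((p i)^(a i) / ((a i).factorial : ℝ)) := by
    rw [hprodfact, hprodp, Finset.prod_div_distrib]
    field_simp
  have hprodnn : (0:ℝ) ≤ ∏ i ∈ T, ((p i)^(a i) / ((a i).factorial : ℝ)) := by
    apply Finset.prod_nonneg; intro i _
    exact div_nonneg (pow_nonneg (hppos i) _) (by positivity)
  have hfu := fact_upper m hm1
  have hfac : (0:ℝ) ≤ 1 - 1/(k:ℝ) := by
    rw [sub_nonneg, div_le_one hk0]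
    have : (10:ℝ) ≤ (k:ℝ) := by exact_mod_cast hk
    linarith
  have hE : Real.exp 1 * (1 - 1/(k:ℝ))^m ≤ 1.106 := by
    have h1 : (1 - 1/(k:ℝ)) ≤ Real.exp (-(1/(k:ℝ))) := by
      have := Real.add_one_le_exp (-(1/(k:ℝ))); linarith
    have h2 : (1 - 1/(k:ℝ))^m ≤ Real.exp (-(9/10)) := by
      calc (1 - 1/(k:ℝ))^m ≤ (Real.exp (-(1/(k:ℝ))))^m := pow_le_pow_left₀ hfac h1 m
        _ = Real.exp ((m:ℝ) * (-(1/(k:ℝ)))) := by rw [← Real.exp_nat_mul]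
        _ ≤ Real.exp (-(9/10)) := by
            apply Real.exp_le_exp.2
            rw [hmR]
            have hk10 : (10:ℝ) ≤ (k:ℝ) := by exact_mod_cast hk
            rw [mul_neg, neg_le_neg_iff, mul_one_div, le_div_iff₀ hk0]
            nlinarith
    calc Real.exp 1 * (1 - 1/(k:ℝ))^m ≤ Real.exp 1 * Real.exp (-(9/10)) := by
          apply mul_le_mul_of_nonneg_left h2 (Real.exp_pos 1).le
      _ = Real.exp (1/10) := by rw [← Real.exp_add]; norm_num
      _ ≤ 1.106 := exp_tenth_le
  have hPi1 : (1:ℝ) ≤ ∏ i ∈ T, (a i:ℝ) := by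
    calc (1:ℝ) = ∏ _i ∈ T, (1:ℝ) := by simp
      _ ≤ ∏ i ∈ T, (a i:ℝ) := Finset.prod_le_prod (by intros; norm_num)
          (fun i hi => by exact_mod_cast hmem i hi)
  have hPi0 : (0:ℝ) < ∏ i ∈ T, (a i:ℝ) := by linarith
  have hsqrtPi0 : (0:ℝ) < Real.sqrt (∏ i ∈ T, (a i:ℝ)) := Real.sqrt_pos.2 hPi0
  have hsqrt : Real.sqrt (m:ℝ) * (Real.sqrt (∏ i ∈ T, (a i:ℝ)))⁻¹
      = Real.sqrt ((m:ℝ) / ∏ i ∈ T, (a i:ℝ)) := by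
    rw [Real.sqrt_div (by positivity : (0:ℝ) ≤ (m:ℝ)), div_eq_mul_inv]
  have hgoal : ∏ i ∈ Finset.range r, (((r * a i + 1 : ℕ) : ℝ) / ((r * k : ℕ) : ℝ)) ^ (a i)
      = ∏ i ∈ Finset.range r, p i ^ a i :=
    Finset.prod_congr rfl (fun i _ => by rw [hpdef])
  rw [hgoal, hFQ]
  calc (m.factorial : ℝ) * ∏ i ∈ T, ((p i)^(a i) / ((a i).factorial : ℝ))
      ≤ (Real.exp 1 * Real.sqrt m * ((m:ℝ)/Real.exp 1)^m) * ∏ i ∈ T, ((p i)^(a i) / ((a i).factorial : ℝ)) :=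
        mul_le_mul_of_nonneg_right hfu hprodnn
    _ = (Real.exp 1 * Real.sqrt m) * (((m:ℝ)/Real.exp 1)^m * ∏ i ∈ T, ((p i)^(a i) / ((a i).factorial : ℝ))) := by
        ring
    _ ≤ (Real.exp 1 * Real.sqrt m) * ((1 - 1/(k:ℝ))^m * (0.5584 ^ T.card * (Real.sqrt (∏ i ∈ T, (a i:ℝ)))⁻¹)) :=
        mul_le_mul_of_nonneg_left hprodle (by positivity)
    _ = (Real.exp 1 * (1 - 1/(k:ℝ))^m) * 0.5584 ^ T.card * (Real.sqrt m * (Real.sqrt (∏ i ∈ T, (a i:ℝ)))⁻¹) := by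
        ring
    _ ≤ 1.106 * 0.5584 ^ T.card * (Real.sqrt m * (Real.sqrt (∏ i ∈ T, (a i:ℝ)))⁻¹) := by
        apply mul_le_mul_of_nonneg_right _ (by positivity)
        apply mul_le_mul_of_nonneg_right hE (by positivity)
    _ = 1.106 * 0.5584 ^ T.card * Real.sqrt ((m:ℝ) / ∏ i ∈ T, (a i:ℝ)) := by rw [hsqrt]





set_option maxHeartbeats 2000000 in
lemma gfun_lt (k r : ℕ) (hr : 3 ≤ r) (hk : 10 ≤ k) (a : ℕ → ℕ) (hvec : IsVec k r a) :
    gfun k r a < 1 - 1.06 * Real.exp (-1) := by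
  classical
  obtain ⟨hmono, hsum⟩ := hvec
  have hmaster := master k r hr hk a hsum
  unfold gfun
  set m := k - 1 with hmdef
  set T := (Finset.range r).filter (fun i => a i ≠ 0) with hTdef
  set FQ := ((m.factorial : ℝ) / (∏ i ∈ Finset.range r, ((a i).factorial : ℝ))) *
    (∏ i ∈ Finset.range r, (((r * a i + 1 : ℕ) : ℝ) / ((r * k : ℕ) : ℝ)) ^ (a i)) with hFQdef
  set B := (1 + ((a 0 : ℝ) / ((r * a 0 + 1 : ℕ) : ℝ)) *
      ∑ i ∈ Finset.Ico 1 r, ((r * a i + 1 : ℕ) : ℝ) / ((a i + 1 : ℕ) : ℝ)) with hBdef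
  -- basic facts
  have hm9 : 9 ≤ m := by omega
  have hkm' : k = m + 1 := by omega
  have hm9R : (9:ℝ) ≤ (m:ℝ) := by exact_mod_cast hm9
  have hkm : (k:ℝ) = (m:ℝ) + 1 := by exact_mod_cast hkm'
  clear_value m T FQ B
  have hrR : (3:ℝ) ≤ (r:ℝ) := by exact_mod_cast hr
  have hFQ0 : 0 ≤ FQ := by
    rw [hFQdef]
    apply mul_nonneg
    · positivity
    · apply Finset.prod_nonneg; intro i _; positivity
  have hsum_nn : 0 ≤ ∑ i ∈ Finset.Ico 1 r, ((r * a i + 1 : ℕ) : ℝ) / ((a i + 1 : ℕ) : ℝ) := by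
    apply Finset.sum_nonneg; intro i _; positivity
  have hB1 : 1 ≤ B := by
    rw [hBdef]
    have : 0 ≤ ((a 0 : ℝ) / ((r * a 0 + 1 : ℕ) : ℝ)) := by positivity
    nlinarith
  have hB0 : 0 ≤ B := by linarith
  have hmem : ∀ i ∈ T, 1 ≤ a i := by
    intro i hi; rw [hTdef, Finset.mem_filter] at hi; omega
  have hsumT : ∑ i ∈ T, a i = m := by rw [hTdef, Finset.sum_filter_ne_zero]; exact hsum
  have htm : T.card ≤ m := by
    have := Finset.card_nsmul_le_sum T a 1 hmem
    simpa [hsumT] using this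
  have hT1 : 1 ≤ T.card := by
    rcases Nat.eq_zero_or_pos T.card with h | h
    · exfalso
      rw [Finset.card_eq_zero] at h
      rw [h] at hsumT
      simp at hsumT
      omega
    · exact h
  have hPiNat1 : 1 ≤ ∏ i ∈ T, a i := Finset.one_le_prod' hmem
  have hPiR1 : (1:ℝ) ≤ ∏ i ∈ T, (a i : ℝ) := by
    have : ((∏ i ∈ T, a i : ℕ) : ℝ) = ∏ i ∈ T, (a i : ℝ) := by push_cast; rfl
    rw [← this]; exact_mod_cast hPiNat1
  have hPiR0 : (0:ℝ) < ∏ i ∈ T, (a i : ℝ) := by linarith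
  have hplow : m + 1 ≤ (∏ i ∈ T, a i) + T.card := by
    have := prod_lower T a hmem
    rw [hsumT] at this
    exact this
  have hplowR : (m:ℝ) + 1 ≤ (∏ i ∈ T, (a i:ℝ)) + (T.card : ℝ) := by
    have hcast : ((∏ i ∈ T, a i : ℕ) : ℝ) = ∏ i ∈ T, (a i : ℝ) := by push_cast; rfl
    rw [← hcast]
    exact_mod_cast hplow
  -- generic sqrt bound when 2 ≤ t
  have hsqrt_t : 2 ≤ T.card → Real.sqrt ((m:ℝ) / ∏ i ∈ T, (a i : ℝ)) ≤ Real.sqrt (T.card : ℝ) := by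
    intro ht2
    apply Real.sqrt_le_sqrt
    rw [div_le_iff₀ hPiR0]
    have ht2R : (2:ℝ) ≤ (T.card:ℝ) := by exact_mod_cast ht2
    have htmR : (T.card:ℝ) ≤ (m:ℝ) := by exact_mod_cast htm
    nlinarith
  -- generic bound ρ^t √t ≤ 0.4412 for t ≥ 2
  have hrho_t : ∀ t : ℕ, 2 ≤ t → (0.5584:ℝ)^t * Real.sqrt t ≤ 0.4412 := by
    intro t ht2
    have h1 : (0.5584:ℝ)^t = Real.sqrt (((0.5584:ℝ)^2)^t) := by
      rw [pow_right_comm, Real.sqrt_sq (by positivity)]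
    rw [h1, ← Real.sqrt_mul (by positivity)]
    rw [show (0.4412:ℝ) = Real.sqrt (0.4412^2) from (Real.sqrt_sq (by norm_num)).symm]
    apply Real.sqrt_le_sqrt
    have := geom_dom ((0.5584:ℝ)^2) (by norm_num) (by norm_num) t ht2
    nlinarith
  by_cases h0 : a 0 = 0
  · -- bracket equals 1
    have hBeq : B = 1 := by rw [hBdef, h0]; norm_num
    rw [hBeq, mul_one]
    by_cases ht1 : T.card = 1
    · -- single nonzero coordinate
      obtain ⟨j, hj⟩ := Finset.card_eq_one.mp ht1
      have haj : a j = m := by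
        rw [hj] at hsumT; simpa using hsumT
      have hfacts : ∏ i ∈ Finset.range r, ((a i).factorial : ℝ) = (m.factorial : ℝ) := by
        have h1 : ∏ i ∈ Finset.range r, ((a i).factorial : ℝ) = ∏ i ∈ T, ((a i).factorial : ℝ) := by
          rw [hTdef]
          symm
          apply Finset.prod_filter_of_ne
          intro x hx hne hax
          apply hne; rw [hax]; norm_num
        rw [h1, hj, Finset.prod_singleton, haj]
      have hq : ∏ i ∈ Finset.range r, (((r * a i + 1 : ℕ) : ℝ) / ((r * k : ℕ) : ℝ)) ^ (a i)
          = (((r * m + 1 : ℕ) : ℝ) / ((r * k : ℕ) : ℝ)) ^ m := by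
        have h1 : ∏ i ∈ Finset.range r, (((r * a i + 1 : ℕ) : ℝ) / ((r * k : ℕ) : ℝ)) ^ (a i)
            = ∏ i ∈ T, (((r * a i + 1 : ℕ) : ℝ) / ((r * k : ℕ) : ℝ)) ^ (a i) := by
          rw [hTdef]
          symm
          apply Finset.prod_filter_of_ne
          intro x hx hne hax
          apply hne; rw [hax, pow_zero]
        rw [h1, hj, Finset.prod_singleton, haj]
      have hFQeq : FQ = (((r * m + 1 : ℕ) : ℝ) / ((r * k : ℕ) : ℝ)) ^ m := by
        rw [hFQdef, hfacts, hq, div_self (by positivity), one_mul]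
      have hpj : (((r * m + 1 : ℕ) : ℝ) / ((r * k : ℕ) : ℝ)) ≤ 1 - 3/(5*(m:ℝ)) := by
        have hm0 : (0:ℝ) < (m:ℝ) := by linarith
        have hrk0 : (0:ℝ) < ((r * k : ℕ) : ℝ) := by
          push_cast; rw [hkm]; positivity
        have key : ((r:ℝ)*(m:ℝ)+1) * (5*(m:ℝ)) ≤ (5*(m:ℝ) - 3) * ((r:ℝ)*((m:ℝ)+1)) := by
          nlinarith [mul_nonneg (sub_nonneg.2 hrR) (by linarith : (0:ℝ) ≤ 2*(m:ℝ)-3)]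
        rw [div_le_iff₀ hrk0]
        push_cast
        rw [hkm]
        have h5 : (1:ℝ) - 3/(5*(m:ℝ)) = (5*(m:ℝ)-3)/(5*(m:ℝ)) := by
          field_simp
        rw [h5, div_mul_eq_mul_div, le_div_iff₀ (by positivity : (0:ℝ) < 5*(m:ℝ))]
        nlinarith [key]
      have hpj_exp : (((r * m + 1 : ℕ) : ℝ) / ((r * k : ℕ) : ℝ)) ≤ Real.exp (-(3/(5*(m:ℝ)))) := by
        have := Real.add_one_le_exp (-(3/(5*(m:ℝ))))
        linarith
      have hpow : FQ ≤ 0.55 := by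
        rw [hFQeq]
        calc (((r * m + 1 : ℕ) : ℝ) / ((r * k : ℕ) : ℝ)) ^ m
            ≤ (Real.exp (-(3/(5*(m:ℝ)))))^m := pow_le_pow_left₀ (by positivity) hpj_exp m
          _ = Real.exp ((m:ℝ) * (-(3/(5*(m:ℝ))))) := by rw [← Real.exp_nat_mul]
          _ = Real.exp (-(3/5)) := by
              congr 1
              have hm0 : (m:ℝ) ≠ 0 := by positivity
              field_simp
          _ ≤ 0.55 := exp_neg35_le
      linarith [target_gt]
    · -- at least two nonzero coordinates
      have ht2 : 2 ≤ T.card := by omega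
      have hs := hsqrt_t ht2
      have hrt := hrho_t T.card ht2
      have hsq0 : 0 ≤ Real.sqrt (T.card:ℝ) := Real.sqrt_nonneg _
      calc FQ ≤ 1.106 * 0.5584 ^ T.card * Real.sqrt ((m:ℝ) / ∏ i ∈ T, (a i : ℝ)) := hmaster
        _ ≤ 1.106 * 0.5584 ^ T.card * Real.sqrt (T.card:ℝ) := by
            apply mul_le_mul_of_nonneg_left hs (by positivity)
        _ = 1.106 * (0.5584 ^ T.card * Real.sqrt (T.card:ℝ)) := by ring
        _ ≤ 1.106 * 0.4412 := by
            apply mul_le_mul_of_nonneg_left hrt (by norm_num)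
        _ < 1 - 1.06 * Real.exp (-1) := by
            have h : (1.106:ℝ) * 0.4412 ≤ 0.585 := by norm_num
            linarith [target_gt]
  · -- a 0 ≥ 1 : all coordinates positive
    have hall : ∀ i ∈ Finset.range r, a i ≠ 0 := by
      intro i hi
      rw [Finset.mem_range] at hi
      have := hmono 0 i (Nat.zero_le i) hi
      omega
    have hTfull : T = Finset.range r := by
      rw [hTdef]; exact Finset.filter_true_of_mem hall
    have htr : T.card = r := by rw [hTfull, Finset.card_range]
    have hrm : r ≤ m := by rw [← htr]; exact htm
    -- bracket bound B ≤ r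
    have hterm : ∀ i ∈ Finset.Ico 1 r, ((r * a i + 1 : ℕ) : ℝ) / ((a i + 1 : ℕ) : ℝ) ≤ (r:ℝ) := by
      intro i _
      rw [div_le_iff₀ (by positivity)]
      push_cast
      nlinarith [(Nat.cast_nonneg (a i) : (0:ℝ) ≤ (a i:ℝ)), hrR]
    have hsumB : ∑ i ∈ Finset.Ico 1 r, ((r * a i + 1 : ℕ) : ℝ) / ((a i + 1 : ℕ) : ℝ)
        ≤ ((r:ℝ) - 1) * (r:ℝ) := by
      have := Finset.sum_le_card_nsmul (Finset.Ico 1 r) _ (r:ℝ) hterm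
      rw [Nat.card_Ico] at this
      have hcast : ((r - 1 : ℕ) : ℝ) = (r:ℝ) - 1 := by
        have : 1 ≤ r := by omega
        push_cast [this]; ring
      rw [nsmul_eq_mul, hcast] at this
      exact this
    have hfrac : ((a 0 : ℝ) / ((r * a 0 + 1 : ℕ) : ℝ)) ≤ 1/(r:ℝ) := by
      rw [div_le_div_iff₀ (by positivity) (by positivity)]
      push_cast
      nlinarith [(Nat.cast_nonneg (a 0) : (0:ℝ) ≤ (a 0:ℝ))]
    have hfrac0 : 0 ≤ ((a 0 : ℝ) / ((r * a 0 + 1 : ℕ) : ℝ)) := by positivity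
    have hBr : B ≤ (r:ℝ) := by
      rw [hBdef]
      have h1 : ((a 0 : ℝ) / ((r * a 0 + 1 : ℕ) : ℝ)) *
          (∑ i ∈ Finset.Ico 1 r, ((r * a i + 1 : ℕ) : ℝ) / ((a i + 1 : ℕ) : ℝ))
          ≤ (1/(r:ℝ)) * (((r:ℝ) - 1) * (r:ℝ)) :=
        mul_le_mul hfrac hsumB hsum_nn (by positivity)
      have h2 : (1/(r:ℝ)) * (((r:ℝ) - 1) * (r:ℝ)) = (r:ℝ) - 1 := by
        field_simp
      rw [h2] at h1
      linarith
    -- master with t = r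
    rw [htr] at hmaster
    have hchain : FQ * B ≤ 1.106 * 0.5584 ^ r * Real.sqrt ((m:ℝ) / ∏ i ∈ T, (a i : ℝ)) * B :=
      mul_le_mul_of_nonneg_right hmaster hB0
    rcases le_or_gt 10 r with hr10 | hr10
    · -- r ≥ 10
      have ht2 : 2 ≤ T.card := by omega
      have hs := hsqrt_t ht2
      rw [htr] at hs
      have hcube := cube_dom ((0.5584:ℝ)^2) (by norm_num) (by norm_num) r hr10
      have hrr : (0.5584:ℝ)^r * Real.sqrt (r:ℝ) * (r:ℝ) ≤ 0.094 := by
        set X := (0.5584:ℝ)^r * Real.sqrt (r:ℝ) * (r:ℝ) with hXdef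
        have hX0 : 0 ≤ X := by rw [hXdef]; positivity
        have hXsq : X^2 = (r:ℝ)^3 * ((0.5584:ℝ)^2)^r := by
          rw [hXdef, mul_pow, mul_pow, Real.sq_sqrt (by positivity : (0:ℝ) ≤ (r:ℝ)),
            pow_right_comm]
          ring
        calc X = Real.sqrt (X^2) := (Real.sqrt_sq hX0).symm
          _ ≤ Real.sqrt (0.094^2) := by
              apply Real.sqrt_le_sqrt
              rw [hXsq]
              calc (r:ℝ)^3 * ((0.5584:ℝ)^2)^r ≤ 1000 * ((0.5584:ℝ)^2)^10 := hcube
                _ ≤ 0.094^2 := by norm_num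
          _ = 0.094 := Real.sqrt_sq (by norm_num)
      calc FQ * B ≤ 1.106 * 0.5584 ^ r * Real.sqrt ((m:ℝ) / ∏ i ∈ T, (a i : ℝ)) * B := hchain
        _ ≤ 1.106 * 0.5584 ^ r * Real.sqrt (r:ℝ) * (r:ℝ) := by
            apply mul_le_mul _ hBr hB0 (by positivity)
            apply mul_le_mul_of_nonneg_left hs (by positivity)
        _ = 1.106 * (0.5584 ^ r * Real.sqrt (r:ℝ) * (r:ℝ)) := by ring
        _ ≤ 1.106 * 0.094 := by
            apply mul_le_mul_of_nonneg_left hrr (by norm_num)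
        _ < 1 - 1.06 * Real.exp (-1) := by
            have h : (1.106:ℝ) * 0.094 ≤ 0.585 := by norm_num
            linarith [target_gt]
    · -- 3 ≤ r ≤ 9
      -- prod lower bound in real form
      have hplowR' : (m:ℝ) + 1 - (r:ℝ) ≤ ∏ i ∈ T, (a i:ℝ) := by
        rw [htr] at hplowR
        linarith
      by_cases hr3 : r = 3
      · -- r = 3 : finer analysis
        subst hr3
        have hT3 : T = Finset.range 3 := hTfull
        have hprod3 : ∏ i ∈ T, (a i:ℝ) = (a 0 : ℝ) * (a 1 : ℝ) * (a 2 : ℝ) := by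
          rw [hT3]
          rw [Finset.prod_range_succ, Finset.prod_range_succ, Finset.prod_range_one]
        have hsum3 : a 0 + a 1 + a 2 = m := by
          have : ∑ i ∈ Finset.range 3, a i = m := hsum
          rw [Finset.sum_range_succ, Finset.sum_range_succ, Finset.sum_range_one] at this
          exact this
        have h01 : a 0 ≤ a 1 := hmono 0 1 (by omega) (by omega)
        have h12 : a 1 ≤ a 2 := hmono 1 2 (by omega) (by omega)
        have ha01 : 1 ≤ a 0 := by omega
        have ha0R : (1:ℝ) ≤ (a 0 : ℝ) := by exact_mod_cast ha01
        have ha1R : (1:ℝ) ≤ (a 1 : ℝ) := by exact_mod_cast (le_trans ha01 h01)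
        have ha2R : (1:ℝ) ≤ (a 2 : ℝ) := by exact_mod_cast (le_trans (le_trans ha01 h01) h12)
        have h01R : (a 0 : ℝ) ≤ (a 1 : ℝ) := by exact_mod_cast h01
        have h12R : (a 1 : ℝ) ≤ (a 2 : ℝ) := by exact_mod_cast h12
        have hsum3R : (a 0 : ℝ) + (a 1 : ℝ) + (a 2 : ℝ) = (m:ℝ) := by exact_mod_cast hsum3
        by_cases ha1 : a 0 = 1
        · -- a 0 = 1
          have hB25 : B ≤ 2.5 := by
            have hc : ((a 0 : ℝ) / ((3 * a 0 + 1 : ℕ) : ℝ)) = 1/4 := by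
              rw [ha1]; norm_num
            have h6 : ∑ i ∈ Finset.Ico 1 3, ((3 * a i + 1 : ℕ) : ℝ) / ((a i + 1 : ℕ) : ℝ) ≤ 6 := by
              calc ∑ i ∈ Finset.Ico 1 3, ((3 * a i + 1 : ℕ) : ℝ) / ((a i + 1 : ℕ) : ℝ)
                  ≤ ((3:ℝ) - 1) * 3 := hsumB
                _ = 6 := by norm_num
            rw [hBdef, hc]
            linarith [hsum_nn]
          have hPi : (m:ℝ) ≤ (9/7) * ((a 0:ℝ) * (a 1:ℝ) * (a 2:ℝ)) := by
            have ha1' : (a 0 : ℝ) = 1 := by rw [ha1]; norm_num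
            rw [ha1', one_mul]
            nlinarith
          have hs : Real.sqrt ((m:ℝ) / ∏ i ∈ T, (a i : ℝ)) ≤ 1.134 := by
            rw [show (1.134:ℝ) = Real.sqrt (1.134^2) from (Real.sqrt_sq (by norm_num)).symm]
            apply Real.sqrt_le_sqrt
            rw [div_le_iff₀ hPiR0, hprod3]
            nlinarith
          calc FQ * B ≤ 1.106 * 0.5584 ^ 3 * Real.sqrt ((m:ℝ) / ∏ i ∈ T, (a i : ℝ)) * B := hchain
            _ ≤ 1.106 * 0.5584 ^ 3 * 1.134 * 2.5 := by
                apply mul_le_mul _ hB25 hB0 (by positivity)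
                apply mul_le_mul_of_nonneg_left hs (by positivity)
            _ < 1 - 1.06 * Real.exp (-1) := by
                have h : (1.106:ℝ) * 0.5584 ^ 3 * 1.134 * 2.5 ≤ 0.585 := by norm_num
                linarith [target_gt]
        · -- a 0 ≥ 2
          have ha2' : 2 ≤ a 0 := by omega
          have ha0R2 : (2:ℝ) ≤ (a 0 : ℝ) := by exact_mod_cast ha2'
          have hPi : (m:ℝ) ≤ (3/4) * ((a 0:ℝ) * (a 1:ℝ) * (a 2:ℝ)) := by
            have h4 : (4:ℝ) ≤ (a 0:ℝ) * (a 1:ℝ) := by nlinarith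
            have h3a2 : (m:ℝ) ≤ 3*(a 2:ℝ) := by linarith
            nlinarith [mul_nonneg (by linarith : (0:ℝ) ≤ (a 0:ℝ)*(a 1:ℝ) - 4)
              (by linarith : (0:ℝ) ≤ (a 2:ℝ))]
          have hs : Real.sqrt ((m:ℝ) / ∏ i ∈ T, (a i : ℝ)) ≤ 0.8661 := by
            rw [show (0.8661:ℝ) = Real.sqrt (0.8661^2) from (Real.sqrt_sq (by norm_num)).symm]
            apply Real.sqrt_le_sqrt
            rw [div_le_iff₀ hPiR0, hprod3]
            nlinarith
          calc FQ * B ≤ 1.106 * 0.5584 ^ 3 * Real.sqrt ((m:ℝ) / ∏ i ∈ T, (a i : ℝ)) * B := hchain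
            _ ≤ 1.106 * 0.5584 ^ 3 * 0.8661 * 3 := by
                apply mul_le_mul _ hBr hB0 (by positivity)
                apply mul_le_mul_of_nonneg_left hs (by positivity)
            _ < 1 - 1.06 * Real.exp (-1) := by
                have h : (1.106:ℝ) * 0.5584 ^ 3 * 0.8661 * 3 ≤ 0.585 := by norm_num
                linarith [target_gt]
      · -- 4 ≤ r ≤ 9
        have hr4 : 4 ≤ r := by omega
        have hr9 : r ≤ 9 := by omega
        have hrmR : (r:ℝ) ≤ (m:ℝ) := by exact_mod_cast hrm
        have hPir : (m:ℝ) * (10 - (r:ℝ)) ≤ 9 * ∏ i ∈ T, (a i:ℝ) := by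
          have h9 : (r:ℝ) ≤ 9 := by exact_mod_cast hr9
          nlinarith
        clear hsqrt_t hrho_t hmaster hterm hsumB hfrac htm hplowR hplow hsumT hmem hsum
        interval_cases r
        · -- r = 4
          have hs : Real.sqrt ((m:ℝ) / ∏ i ∈ T, (a i : ℝ)) ≤ 1.2248 := by
            rw [show (1.2248:ℝ) = Real.sqrt (1.2248^2) from (Real.sqrt_sq (by norm_num)).symm]
            apply Real.sqrt_le_sqrt
            rw [div_le_iff₀ hPiR0]
            norm_num at hPir
            nlinarith [hPir, hPiR0.le]
          calc FQ * B ≤ 1.106 * 0.5584 ^ 4 * Real.sqrt ((m:ℝ) / ∏ i ∈ T, (a i : ℝ)) * B := hchain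
            _ ≤ 1.106 * 0.5584 ^ 4 * 1.2248 * 4 :=
                mul_le_mul (mul_le_mul_of_nonneg_left hs (by positivity)) hBr hB0 (by positivity)
            _ < 1 - 1.06 * Real.exp (-1) := by
                have h : (1.106:ℝ) * 0.5584 ^ 4 * 1.2248 * 4 ≤ 0.585 := by norm_num
                linarith [target_gt]
        · -- r = 5
          have hs : Real.sqrt ((m:ℝ) / ∏ i ∈ T, (a i : ℝ)) ≤ 1.3417 := by
            rw [show (1.3417:ℝ) = Real.sqrt (1.3417^2) from (Real.sqrt_sq (by norm_num)).symm]
            apply Real.sqrt_le_sqrt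
            rw [div_le_iff₀ hPiR0]
            norm_num at hPir
            nlinarith [hPir, hPiR0.le]
          calc FQ * B ≤ 1.106 * 0.5584 ^ 5 * Real.sqrt ((m:ℝ) / ∏ i ∈ T, (a i : ℝ)) * B := hchain
            _ ≤ 1.106 * 0.5584 ^ 5 * 1.3417 * 5 :=
                mul_le_mul (mul_le_mul_of_nonneg_left hs (by positivity)) hBr hB0 (by positivity)
            _ < 1 - 1.06 * Real.exp (-1) := by
                have h : (1.106:ℝ) * 0.5584 ^ 5 * 1.3417 * 5 ≤ 0.585 := by norm_num
                linarith [target_gt]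
        · -- r = 6
          have hs : Real.sqrt ((m:ℝ) / ∏ i ∈ T, (a i : ℝ)) ≤ 1.5 := by
            rw [show (1.5:ℝ) = Real.sqrt (1.5^2) from (Real.sqrt_sq (by norm_num)).symm]
            apply Real.sqrt_le_sqrt
            rw [div_le_iff₀ hPiR0]
            norm_num at hPir
            nlinarith [hPir, hPiR0.le]
          calc FQ * B ≤ 1.106 * 0.5584 ^ 6 * Real.sqrt ((m:ℝ) / ∏ i ∈ T, (a i : ℝ)) * B := hchain
            _ ≤ 1.106 * 0.5584 ^ 6 * 1.5 * 6 :=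
                mul_le_mul (mul_le_mul_of_nonneg_left hs (by positivity)) hBr hB0 (by positivity)
            _ < 1 - 1.06 * Real.exp (-1) := by
                have h : (1.106:ℝ) * 0.5584 ^ 6 * 1.5 * 6 ≤ 0.585 := by norm_num
                linarith [target_gt]
        · -- r = 7
          have hs : Real.sqrt ((m:ℝ) / ∏ i ∈ T, (a i : ℝ)) ≤ 1.7321 := by
            rw [show (1.7321:ℝ) = Real.sqrt (1.7321^2) from (Real.sqrt_sq (by norm_num)).symm]
            apply Real.sqrt_le_sqrt
            rw [div_le_iff₀ hPiR0]
            norm_num at hPir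
            nlinarith [hPir, hPiR0.le]
          calc FQ * B ≤ 1.106 * 0.5584 ^ 7 * Real.sqrt ((m:ℝ) / ∏ i ∈ T, (a i : ℝ)) * B := hchain
            _ ≤ 1.106 * 0.5584 ^ 7 * 1.7321 * 7 :=
                mul_le_mul (mul_le_mul_of_nonneg_left hs (by positivity)) hBr hB0 (by positivity)
            _ < 1 - 1.06 * Real.exp (-1) := by
                have h : (1.106:ℝ) * 0.5584 ^ 7 * 1.7321 * 7 ≤ 0.585 := by norm_num
                linarith [target_gt]
        · -- r = 8
          have hs : Real.sqrt ((m:ℝ) / ∏ i ∈ T, (a i : ℝ)) ≤ 2.1214 := by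
            rw [show (2.1214:ℝ) = Real.sqrt (2.1214^2) from (Real.sqrt_sq (by norm_num)).symm]
            apply Real.sqrt_le_sqrt
            rw [div_le_iff₀ hPiR0]
            norm_num at hPir
            nlinarith [hPir, hPiR0.le]
          calc FQ * B ≤ 1.106 * 0.5584 ^ 8 * Real.sqrt ((m:ℝ) / ∏ i ∈ T, (a i : ℝ)) * B := hchain
            _ ≤ 1.106 * 0.5584 ^ 8 * 2.1214 * 8 :=
                mul_le_mul (mul_le_mul_of_nonneg_left hs (by positivity)) hBr hB0 (by positivity)
            _ < 1 - 1.06 * Real.exp (-1) := by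
                have h : (1.106:ℝ) * 0.5584 ^ 8 * 2.1214 * 8 ≤ 0.585 := by norm_num
                linarith [target_gt]
        · -- r = 9
          have hs : Real.sqrt ((m:ℝ) / ∏ i ∈ T, (a i : ℝ)) ≤ 3 := by
            rw [show (3:ℝ) = Real.sqrt (3^2) from (Real.sqrt_sq (by norm_num)).symm]
            apply Real.sqrt_le_sqrt
            rw [div_le_iff₀ hPiR0]
            norm_num at hPir
            nlinarith [hPir, hPiR0.le]
          calc FQ * B ≤ 1.106 * 0.5584 ^ 9 * Real.sqrt ((m:ℝ) / ∏ i ∈ T, (a i : ℝ)) * B := hchain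
            _ ≤ 1.106 * 0.5584 ^ 9 * 3 * 9 :=
                mul_le_mul (mul_le_mul_of_nonneg_left hs (by positivity)) hBr hB0 (by positivity)
            _ < 1 - 1.06 * Real.exp (-1) := by
                have h : (1.106:ℝ) * 0.5584 ^ 9 * 3 * 9 ≤ 0.585 := by norm_num
                linarith [target_gt]

end AuxGr

theorem gr_lt_f0_r3 (k r : ℕ) (hr : 3 ≤ r) (hk : 10 ≤ k) :
    gThr k r < 1 - (1 - 1 / (k : ℝ)) ^ (k - 1) ∧
    (∀ a : ℕ → ℕ, IsVec k r a → gfun k r a < 1 - 1.06 * Real.exp (-1)) ∧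
    1 - 1.06 * Real.exp (-1) ≤ 1 - (1 - 1 / (k : ℝ)) ^ (k - 1) := by
  have hmain : ∀ a : ℕ → ℕ, IsVec k r a → gfun k r a < 1 - 1.06 * Real.exp (-1) :=
    fun a ha => gfun_lt k r hr hk a ha
  have hpow := pow_lt_main k hk
  refine ⟨?_, hmain, by linarith⟩
  have h1 : gThr k r ≤ 1 - 1.06 * Real.exp (-1) := by
    apply Real.sSup_le
    · rintro x ⟨a, ha, rfl⟩
      exact (hmain a ha).le
    · linarith [target_gt]
  linarith
end
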